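/- arXiv:1311.6405 — 4 statements merged into one kernel-verified Lean document; each statement's English description precedes it below -/
import Mathlib

section
/- Let ψ, ξ : [0,∞) → ℝ and let α, β : [0,∞) → ℝ satisfy α(t) ≤ β(t) for all t ≥ 0. If α(t) ≤ ψ(t) − ξ(t) ≤ β(t) for all t ≥ 0, then for all 0 ≤ a < b < ∞ one has TV(ξ,[a,b]) ≥ TV^{α,β}(ψ,[a,b]), UTV(ξ,[a,b]) ≥ UTV^{α,β}(ψ,[a,b]) and DTV(ξ,[a,b]) ≥ DTV^{α,β}(ψ,[a,b]). -/
open Filter Set Topology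
open scoped ENNReal

/-- Sum of `f` over consecutive pairs of a finite sequence of points. -/
noncomputable def genVar (f : ℝ → ℝ → ℝ) (a b : ℝ) : ℝ≥0∞ :=
  ⨆ (n : ℕ) (t : ℕ → ℝ)
    (_ : (∀ i, i < n → t i < t (i + 1)) ∧ a ≤ t 0 ∧ t n ≤ b),
    ENNReal.ofReal (∑ i ∈ Finset.range n, f (t i) (t (i + 1)))

noncomputable def TV (ψ : ℝ → ℝ) : ℝ → ℝ → ℝ≥0∞ :=
  genVar (fun s t => |ψ t - ψ s|)

noncomputable def UTV (ψ : ℝ → ℝ) : ℝ → ℝ → ℝ≥0∞ :=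
  genVar (fun s t => max (ψ t - ψ s) 0)

noncomputable def DTV (ψ : ℝ → ℝ) : ℝ → ℝ → ℝ≥0∞ :=
  genVar (fun s t => max (ψ s - ψ t) 0)

noncomputable def TVc (ψ : ℝ → ℝ) (c : ℝ) : ℝ → ℝ → ℝ≥0∞ :=
  genVar (fun s t => max (|ψ t - ψ s| - c) 0)

noncomputable def UTVc (ψ : ℝ → ℝ) (c : ℝ) : ℝ → ℝ → ℝ≥0∞ :=
  genVar (fun s t => max (ψ t - ψ s - c) 0)

noncomputable def DTVc (ψ : ℝ → ℝ) (c : ℝ) : ℝ → ℝ → ℝ≥0∞ :=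
  genVar (fun s t => max (ψ s - ψ t - c) 0)

noncomputable def TVab (ψ α β : ℝ → ℝ) : ℝ → ℝ → ℝ≥0∞ :=
  genVar (fun s t =>
    max (|(ψ t - (α t + β t) / 2) - (ψ s - (α s + β s) / 2)|
          - ((β t - α t) + (β s - α s)) / 2) 0)

noncomputable def UTVab (ψ α β : ℝ → ℝ) : ℝ → ℝ → ℝ≥0∞ :=
  genVar (fun s t =>
    max ((ψ t - (α t + β t) / 2) - (ψ s - (α s + β s) / 2)
          - ((β t - α t) + (β s - α s)) / 2) 0)

noncomputable def DTVab (ψ α β : ℝ → ℝ) : ℝ → ℝ → ℝ≥0∞ :=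
  genVar (fun s t =>
    max ((ψ s - (α s + β s) / 2) - (ψ t - (α t + β t) / 2)
          - ((β t - α t) + (β s - α s)) / 2) 0)

/-- Regulated on `[a,∞)`: right limits everywhere, left limits at points `> a`. -/
def Regulated (a : ℝ) (ψ : ℝ → ℝ) : Prop :=
  (∀ x, a ≤ x → ∃ L, Tendsto ψ (𝓝[>] x) (𝓝 L)) ∧
  (∀ x, a < x → ∃ L, Tendsto ψ (𝓝[<] x) (𝓝 L))

/-- Regulated on `[a,b]`. -/
def RegulatedOn (a b : ℝ) (ψ : ℝ → ℝ) : Prop :=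
  (∀ x, a ≤ x → x < b → ∃ L, Tendsto ψ (𝓝[>] x) (𝓝 L)) ∧
  (∀ x, a < x → x ≤ b → ∃ L, Tendsto ψ (𝓝[<] x) (𝓝 L))

lemma genVar_mono {f g : ℝ → ℝ → ℝ} {a b : ℝ}
    (hfg : ∀ s t, a ≤ s → a ≤ t → f s t ≤ g s t) :
    genVar f a b ≤ genVar g a b := by
  unfold genVar
  refine iSup_le fun n => iSup_le fun t => iSup_le fun ht => ?_
  have hmem : ∀ i, i ≤ n → a ≤ t i := by
    intro i hi
    induction i with
    | zero => exact ht.2.1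
    | succ k ih =>
      have hk : k < n := Nat.lt_of_succ_le hi
      exact le_of_lt (lt_of_le_of_lt (ih (le_of_lt hk)) (ht.1 k hk))
  have hsum : ∑ i ∈ Finset.range n, f (t i) (t (i + 1)) ≤
      ∑ i ∈ Finset.range n, g (t i) (t (i + 1)) := by
    refine Finset.sum_le_sum fun i hi => ?_
    have hi' := Finset.mem_range.mp hi
    exact hfg _ _ (hmem i (le_of_lt hi')) (hmem (i + 1) hi')
  calc ENNReal.ofReal (∑ i ∈ Finset.range n, f (t i) (t (i + 1)))
      ≤ ENNReal.ofReal (∑ i ∈ Finset.range n, g (t i) (t (i + 1))) :=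
        ENNReal.ofReal_le_ofReal hsum
    _ ≤ _ := by
        refine le_iSup_of_le n ?_
        refine le_iSup_of_le t ?_
        exact le_iSup_of_le ht le_rfl

/-- the α,β-truncated variations are lower bounds for the
total, positive and negative variations of any function `ξ` with
`α ≤ ψ - ξ ≤ β` on `[0,∞)`. -/
theorem stmt0 (ψ ξ α β : ℝ → ℝ)
    (hαβ : ∀ t, 0 ≤ t → α t ≤ β t)
    (h : ∀ t, 0 ≤ t → α t ≤ ψ t - ξ t ∧ ψ t - ξ t ≤ β t)
    (a b : ℝ) (ha : 0 ≤ a) (hab : a < b) :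
    TVab ψ α β a b ≤ TV ξ a b ∧
    UTVab ψ α β a b ≤ UTV ξ a b ∧
    DTVab ψ α β a b ≤ DTV ξ a b := by
  have key : ∀ s t, a ≤ s → a ≤ t →
      ((ψ t - (α t + β t) / 2) - (ψ s - (α s + β s) / 2)
        - ((β t - α t) + (β s - α s)) / 2 ≤ ξ t - ξ s) ∧
      ((ψ s - (α s + β s) / 2) - (ψ t - (α t + β t) / 2)
        - ((β t - α t) + (β s - α s)) / 2 ≤ ξ s - ξ t) := by
    intro s t hs ht
    have hs0 : (0:ℝ) ≤ s := le_trans ha hs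
    have ht0 : (0:ℝ) ≤ t := le_trans ha ht
    obtain ⟨hs1, hs2⟩ := h s hs0
    obtain ⟨ht1, ht2⟩ := h t ht0
    constructor <;> nlinarith
  refine ⟨genVar_mono ?_, genVar_mono ?_, genVar_mono ?_⟩ <;>
    intro s t hs ht <;> obtain ⟨h1, h2⟩ := key s t hs ht
  · simp only [max_le_iff]
    refine ⟨?_, abs_nonneg _⟩
    have h3 := le_abs_self (ξ t - ξ s)
    have h4 := neg_abs_le (ξ t - ξ s)
    rcases abs_cases ((ψ t - (α t + β t) / 2) - (ψ s - (α s + β s) / 2)) with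
      ⟨he, _⟩ | ⟨he, _⟩ <;> rw [he] <;> linarith
  · rcases le_or_gt (ξ t - ξ s) 0 with hc | hc
    · have : max (ξ t - ξ s) 0 = 0 := max_eq_right hc
      rw [this]; simp only [max_le_iff]; exact ⟨by linarith, le_rfl⟩
    · have : max (ξ t - ξ s) 0 = ξ t - ξ s := max_eq_left hc.le
      rw [this]; simp only [max_le_iff]; exact ⟨by linarith, hc.le⟩
  · rcases le_or_gt (ξ s - ξ t) 0 with hc | hc
    · have : max (ξ s - ξ t) 0 = 0 := max_eq_right hc
      rw [this]; simp only [max_le_iff]; exact ⟨by linarith, le_rfl⟩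
    · have : max (ξ s - ξ t) 0 = ξ s - ξ t := max_eq_left hc.le
      rw [this]; simp only [max_le_iff]; exact ⟨by linarith, hc.le⟩
end

section
/- For every regulated function ψ : [0,∞) → ℝ, every 0 ≤ a < b < ∞ and every c > 0, the truncated variation splits as TV^c(ψ,[a,b]) = UTV^c(ψ,[a,b]) + DTV^c(ψ,[a,b]). -/
open Filter Set Topology
open scoped ENNReal

namespace Stmt3Aux

def uval (ψ : ℝ → ℝ) (c : ℝ) (iv : ℝ × ℝ) : ℝ := ψ iv.2 - ψ iv.1 - c
def dval (ψ : ℝ → ℝ) (c : ℝ) (iv : ℝ × ℝ) : ℝ := ψ iv.1 - ψ iv.2 - c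
def mval (ψ : ℝ → ℝ) (c : ℝ) (m : (ℝ × ℝ) × Bool) : ℝ :=
  if m.2 then uval ψ c m.1 else dval ψ c m.1

def ChL (l : List (ℝ × ℝ)) : Prop :=
  l.Pairwise (fun x y => x.2 ≤ y.1) ∧ ∀ iv ∈ l, iv.1 < iv.2

def MChL (l : List ((ℝ × ℝ) × Bool)) : Prop :=
  l.Pairwise (fun x y => x.1.2 ≤ y.1.1) ∧ ∀ m ∈ l, m.1.1 < m.1.2

def Bdd (lo hi : ℝ) (l : List (ℝ × ℝ)) : Prop := ∀ iv ∈ l, lo ≤ iv.1 ∧ iv.2 ≤ hi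

def MBdd (lo hi : ℝ) (l : List ((ℝ × ℝ) × Bool)) : Prop :=
  ∀ m ∈ l, lo ≤ m.1.1 ∧ m.1.2 ≤ hi

lemma chL_cons {iv : ℝ × ℝ} {l : List (ℝ × ℝ)} :
    ChL (iv :: l) ↔ (∀ x ∈ l, iv.2 ≤ x.1) ∧ iv.1 < iv.2 ∧ ChL l := by
  simp [ChL, List.pairwise_cons]; tauto

lemma mChL_cons {m : (ℝ × ℝ) × Bool} {l : List ((ℝ × ℝ) × Bool)} :
    MChL (m :: l) ↔ (∀ x ∈ l, m.1.2 ≤ x.1.1) ∧ m.1.1 < m.1.2 ∧ MChL l := by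
  simp [MChL, List.pairwise_cons]; tauto

lemma assemble {m₀ : (ℝ × ℝ) × Bool} {L' : List ((ℝ × ℝ) × Bool)} {lo hi : ℝ}
    (h0 : m₀.1.1 < m₀.1.2) (hlo : lo ≤ m₀.1.1) (hhi : m₀.1.2 ≤ hi)
    (hL' : MChL L') (hb : MBdd m₀.1.2 hi L') :
    MChL (m₀ :: L') ∧ MBdd lo hi (m₀ :: L') := by
  constructor
  · exact mChL_cons.2 ⟨fun x hx => (hb x hx).1, h0, hL'⟩
  · intro m hm
    rcases List.mem_cons.1 hm with rfl | hm
    · exact ⟨hlo, hhi⟩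
    · exact ⟨le_trans (le_trans hlo h0.le) (hb m hm).1, (hb m hm).2⟩

theorem coreStep (c : ℝ) (hc : 0 ≤ c) (K : ℕ)
    (IH : ∀ (ψ : ℝ → ℝ) (U D : List (ℝ × ℝ)) (lo hi : ℝ),
      U.length + D.length ≤ K → ChL U → ChL D → Bdd lo hi U → Bdd lo hi D →
      ∃ L, MChL L ∧ MBdd lo hi L ∧
        (U.map (uval ψ c)).sum + (D.map (dval ψ c)).sum ≤ (L.map (mval ψ c)).sum)
    (ψ : ℝ → ℝ) (u d : ℝ × ℝ) (U' D' : List (ℝ × ℝ)) (lo hi : ℝ)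
    (hlen : (u :: U').length + (d :: D').length ≤ K + 1)
    (hU : ChL (u :: U')) (hD : ChL (d :: D'))
    (hbU : Bdd lo hi (u :: U')) (hbD : Bdd lo hi (d :: D'))
    (h1 : u.1 ≤ d.1) :
    ∃ L, MChL L ∧ MBdd lo hi L ∧
      ((u :: U').map (uval ψ c)).sum + ((d :: D').map (dval ψ c)).sum
        ≤ (L.map (mval ψ c)).sum := by
  have hU0 := hU; have hD0 := hD
  rw [chL_cons] at hU0 hD0
  obtain ⟨hUhead, huv, hU'⟩ := hU0
  obtain ⟨hDhead, hdv, hD'⟩ := hD0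
  have hbu := hbU u List.mem_cons_self
  have hbd := hbD d List.mem_cons_self
  have hbU' : Bdd lo hi U' := fun iv h => hbU iv (List.mem_cons_of_mem _ h)
  have hbD' : Bdd lo hi D' := fun iv h => hbD iv (List.mem_cons_of_mem _ h)
  have hlen' : U'.length + D'.length + 1 ≤ K := by
    simp only [List.length_cons] at hlen; omega
  rcases le_or_gt u.2 d.1 with hpeel | hov
  · -- peel off u
    obtain ⟨L', hL', hbL', hsum⟩ := IH ψ U' (d :: D') u.2 hi
      (by simp only [List.length_cons]; omega) hU' hD
      (fun iv h => ⟨hUhead iv h, (hbU' iv h).2⟩)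
      (by
        intro iv hiv
        rcases List.mem_cons.1 hiv with rfl | h
        · exact ⟨hpeel, hbd.2⟩
        · exact ⟨le_trans hpeel (le_trans hdv.le (hDhead iv h)), (hbD' iv h).2⟩)
    obtain ⟨hc1, hc2⟩ := assemble (m₀ := (u, true)) huv hbu.1 hbu.2 hL' hbL'
    refine ⟨(u, true) :: L', hc1, hc2, ?_⟩
    have key : mval ψ c (u, true) = uval ψ c u := by simp [mval]
    simp only [List.map_cons, List.sum_cons] at hsum ⊢
    linarith
  · -- overlap : d.1 < u.2
    rcases lt_or_eq_of_le h1 with hpr | hpr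
    · -- u.1 < d.1 : m₀ = ((u.1,d.1), true) in all subcases
      have h0 : ((u.1, d.1), true).1.1 < ((u.1, d.1), true).1.2 := hpr
      have hhi0 : d.1 ≤ hi := le_trans hdv.le hbd.2
      rcases lt_trichotomy u.2 d.2 with hqw | hqw | hqw
      · -- (iv) crossing : u.2 < d.2
        obtain ⟨L', hL', hbL', hsum⟩ := IH ψ U' ((u.2, d.2) :: D') d.1 hi
          (by simp only [List.length_cons]; omega) hU'
          (chL_cons.2 ⟨fun x hx => hDhead x hx, hqw, hD'⟩)
          (fun iv h => ⟨le_trans hov.le (hUhead iv h), (hbU' iv h).2⟩)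
          (by
            intro iv hiv
            rcases List.mem_cons.1 hiv with rfl | h
            · exact ⟨hov.le, hbd.2⟩
            · exact ⟨le_trans hdv.le (hDhead iv h), (hbD' iv h).2⟩)
        obtain ⟨hc1, hc2⟩ := assemble (m₀ := ((u.1, d.1), true)) h0 hbu.1 hhi0 hL' hbL'
        refine ⟨((u.1, d.1), true) :: L', hc1, hc2, ?_⟩
        have key : uval ψ c u + dval ψ c d
            = mval ψ c ((u.1, d.1), true) + dval ψ c (u.2, d.2) := by
          simp [mval, uval, dval]; ring
        simp only [List.map_cons, List.sum_cons] at hsum ⊢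
        linarith
      · -- (v) u.2 = d.2
        rcases le_or_gt (ψ d.1) (ψ u.2) with hs | hs
        · obtain ⟨L', hL', hbL', hsum⟩ := IH ψ ((d.1, u.2) :: U') D' d.1 hi
            (by simp only [List.length_cons]; omega)
            (chL_cons.2 ⟨hUhead, hov, hU'⟩) hD'
            (by
              intro iv hiv
              rcases List.mem_cons.1 hiv with rfl | h
              · exact ⟨le_rfl, hbu.2⟩
              · exact ⟨le_trans hov.le (hUhead iv h), (hbU' iv h).2⟩)
            (fun iv h => ⟨le_trans hdv.le (hDhead iv h), (hbD' iv h).2⟩)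
          obtain ⟨hc1, hc2⟩ := assemble (m₀ := ((u.1, d.1), true)) h0 hbu.1 hhi0 hL' hbL'
          refine ⟨((u.1, d.1), true) :: L', hc1, hc2, ?_⟩
          have hval : ψ d.2 = ψ u.2 := by rw [hqw]
          have key : uval ψ c u + dval ψ c d
              ≤ mval ψ c ((u.1, d.1), true) + uval ψ c (d.1, u.2) := by
            simp [mval, uval, dval]
            linarith
          simp only [List.map_cons, List.sum_cons] at hsum ⊢
          linarith
        · obtain ⟨L', hL', hbL', hsum⟩ := IH ψ U' ((d.1, u.2) :: D') d.1 hi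
            (by simp only [List.length_cons]; omega) hU'
            (chL_cons.2 ⟨fun x hx => hqw ▸ hDhead x hx, hov, hD'⟩)
            (fun iv h => ⟨le_trans hov.le (hUhead iv h), (hbU' iv h).2⟩)
            (by
              intro iv hiv
              rcases List.mem_cons.1 hiv with rfl | h
              · exact ⟨le_rfl, hbu.2⟩
              · exact ⟨le_trans hdv.le (hDhead iv h), (hbD' iv h).2⟩)
          obtain ⟨hc1, hc2⟩ := assemble (m₀ := ((u.1, d.1), true)) h0 hbu.1 hhi0 hL' hbL'
          refine ⟨((u.1, d.1), true) :: L', hc1, hc2, ?_⟩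
          have hval : ψ d.2 = ψ u.2 := by rw [hqw]
          have key : uval ψ c u + dval ψ c d
              ≤ mval ψ c ((u.1, d.1), true) + dval ψ c (d.1, u.2) := by
            simp [mval, uval, dval]
            linarith
          simp only [List.map_cons, List.sum_cons] at hsum ⊢
          linarith
      · -- (vi) nested : d.2 < u.2
        obtain ⟨L', hL', hbL', hsum⟩ := IH ψ ((d.2, u.2) :: U') D' d.1 hi
          (by simp only [List.length_cons]; omega)
          (chL_cons.2 ⟨hUhead, hqw, hU'⟩) hD'
          (by
            intro iv hiv
            rcases List.mem_cons.1 hiv with rfl | h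
            · exact ⟨hdv.le, hbu.2⟩
            · exact ⟨le_trans hov.le (hUhead iv h), (hbU' iv h).2⟩)
          (fun iv h => ⟨le_trans hdv.le (hDhead iv h), (hbD' iv h).2⟩)
        obtain ⟨hc1, hc2⟩ := assemble (m₀ := ((u.1, d.1), true)) h0 hbu.1 hhi0 hL' hbL'
        refine ⟨((u.1, d.1), true) :: L', hc1, hc2, ?_⟩
        have key : uval ψ c u + dval ψ c d
            = mval ψ c ((u.1, d.1), true) + uval ψ c (d.2, u.2) := by
          simp [mval, uval, dval]; ring
        simp only [List.map_cons, List.sum_cons] at hsum ⊢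
        linarith
    · -- u.1 = d.1
      have hval : ψ u.1 = ψ d.1 := by rw [hpr]
      rcases lt_trichotomy u.2 d.2 with hqw | hqw | hqw
      · -- (i) u.2 < d.2
        obtain ⟨L', hL', hbL', hsum⟩ := IH ψ U' ((u.2, d.2) :: D') u.2 hi
          (by simp only [List.length_cons]; omega) hU'
          (chL_cons.2 ⟨fun x hx => hDhead x hx, hqw, hD'⟩)
          (fun iv h => ⟨hUhead iv h, (hbU' iv h).2⟩)
          (by
            intro iv hiv
            rcases List.mem_cons.1 hiv with rfl | h
            · exact ⟨le_rfl, hbd.2⟩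
            · exact ⟨le_trans hqw.le (hDhead iv h), (hbD' iv h).2⟩)
        rcases le_or_gt (ψ u.1) (ψ u.2) with hs | hs
        · obtain ⟨hc1, hc2⟩ := assemble (m₀ := (u, true)) huv hbu.1 hbu.2 hL' hbL'
          refine ⟨(u, true) :: L', hc1, hc2, ?_⟩
          have key : uval ψ c u + dval ψ c d
              ≤ mval ψ c (u, true) + dval ψ c (u.2, d.2) := by
            simp [mval, uval, dval]
            linarith
          simp only [List.map_cons, List.sum_cons] at hsum ⊢
          linarith
        · obtain ⟨hc1, hc2⟩ := assemble (m₀ := (u, false)) huv hbu.1 hbu.2 hL' hbL'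
          refine ⟨(u, false) :: L', hc1, hc2, ?_⟩
          have key : uval ψ c u + dval ψ c d
              ≤ mval ψ c (u, false) + dval ψ c (u.2, d.2) := by
            simp [mval, uval, dval]
            linarith
          simp only [List.map_cons, List.sum_cons] at hsum ⊢
          linarith
      · -- (ii) u = d as intervals
        obtain ⟨L', hL', hbL', hsum⟩ := IH ψ U' D' u.2 hi
          (by omega) hU' hD'
          (fun iv h => ⟨hUhead iv h, (hbU' iv h).2⟩)
          (fun iv h => ⟨hqw ▸ hDhead iv h, (hbD' iv h).2⟩)
        have hval2 : ψ u.2 = ψ d.2 := by rw [hqw]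
        rcases le_or_gt (ψ u.1) (ψ u.2) with hs | hs
        · obtain ⟨hc1, hc2⟩ := assemble (m₀ := (u, true)) huv hbu.1 hbu.2 hL' hbL'
          refine ⟨(u, true) :: L', hc1, hc2, ?_⟩
          have key : uval ψ c u + dval ψ c d ≤ mval ψ c (u, true) := by
            simp [mval, uval, dval]
            linarith
          simp only [List.map_cons, List.sum_cons] at hsum ⊢
          linarith
        · obtain ⟨hc1, hc2⟩ := assemble (m₀ := (u, false)) huv hbu.1 hbu.2 hL' hbL'
          refine ⟨(u, false) :: L', hc1, hc2, ?_⟩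
          have key : uval ψ c u + dval ψ c d ≤ mval ψ c (u, false) := by
            simp [mval, uval, dval]
            linarith
          simp only [List.map_cons, List.sum_cons] at hsum ⊢
          linarith
      · -- (iii) d.2 < u.2
        have h0 : (u.1 : ℝ) < d.2 := hpr ▸ hdv
        obtain ⟨L', hL', hbL', hsum⟩ := IH ψ ((d.2, u.2) :: U') D' d.2 hi
          (by simp only [List.length_cons]; omega)
          (chL_cons.2 ⟨hUhead, hqw, hU'⟩) hD'
          (by
            intro iv hiv
            rcases List.mem_cons.1 hiv with rfl | h
            · exact ⟨le_rfl, hbu.2⟩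
            · exact ⟨le_trans hqw.le (hUhead iv h), (hbU' iv h).2⟩)
          (fun iv h => ⟨hDhead iv h, (hbD' iv h).2⟩)
        rcases le_or_gt (ψ u.1) (ψ d.2) with hs | hs
        · obtain ⟨hc1, hc2⟩ := assemble (m₀ := ((u.1, d.2), true)) h0 hbu.1 hbd.2 hL' hbL'
          refine ⟨((u.1, d.2), true) :: L', hc1, hc2, ?_⟩
          have key : uval ψ c u + dval ψ c d
              ≤ mval ψ c ((u.1, d.2), true) + uval ψ c (d.2, u.2) := by
            simp [mval, uval, dval]
            linarith
          simp only [List.map_cons, List.sum_cons] at hsum ⊢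
          linarith
        · obtain ⟨hc1, hc2⟩ := assemble (m₀ := ((u.1, d.2), false)) h0 hbu.1 hbd.2 hL' hbL'
          refine ⟨((u.1, d.2), false) :: L', hc1, hc2, ?_⟩
          have key : uval ψ c u + dval ψ c d
              ≤ mval ψ c ((u.1, d.2), false) + uval ψ c (d.2, u.2) := by
            simp [mval, uval, dval]
            linarith
          simp only [List.map_cons, List.sum_cons] at hsum ⊢
          linarith

lemma uval_neg (ψ : ℝ → ℝ) (c : ℝ) (iv : ℝ × ℝ) :
    uval (fun x => -ψ x) c iv = dval ψ c iv := by simp [uval, dval]; ring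

lemma dval_neg (ψ : ℝ → ℝ) (c : ℝ) (iv : ℝ × ℝ) :
    dval (fun x => -ψ x) c iv = uval ψ c iv := by simp [uval, dval]; ring

lemma mval_neg (ψ : ℝ → ℝ) (c : ℝ) (m : (ℝ × ℝ) × Bool) :
    mval ψ c (m.1, !m.2) = mval (fun x => -ψ x) c m := by
  rcases m with ⟨iv, b⟩
  cases b <;> simp [mval, uval, dval] <;> ring

lemma mChL_map_mk {l : List (ℝ × ℝ)} (b : Bool) (hl : ChL l) :
    MChL (l.map (fun iv => (iv, b))) := by
  constructor
  · exact List.pairwise_map.mpr hl.1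
  · intro m hm
    obtain ⟨iv, hiv, rfl⟩ := List.mem_map.1 hm
    exact hl.2 iv hiv

lemma mBdd_map_mk {l : List (ℝ × ℝ)} {lo hi : ℝ} (b : Bool) (hb : Bdd lo hi l) :
    MBdd lo hi (l.map (fun iv => (iv, b))) := by
  intro m hm
  obtain ⟨iv, hiv, rfl⟩ := List.mem_map.1 hm
  exact hb iv hiv

theorem core (c : ℝ) (hc : 0 ≤ c) :
    ∀ (K : ℕ) (ψ : ℝ → ℝ) (U D : List (ℝ × ℝ)) (lo hi : ℝ),
      U.length + D.length ≤ K → ChL U → ChL D → Bdd lo hi U → Bdd lo hi D →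
      ∃ L, MChL L ∧ MBdd lo hi L ∧
        (U.map (uval ψ c)).sum + (D.map (dval ψ c)).sum ≤ (L.map (mval ψ c)).sum := by
  intro K
  induction K with
  | zero =>
    intro ψ U D lo hi hlen hU hD hbU hbD
    have hU0 : U = [] := List.eq_nil_of_length_eq_zero (by omega)
    have hD0 : D = [] := List.eq_nil_of_length_eq_zero (by omega)
    subst hU0; subst hD0
    exact ⟨[], ⟨List.Pairwise.nil, by simp⟩, by simp [MBdd], by simp⟩
  | succ K IH =>
    intro ψ U D lo hi hlen hU hD hbU hbD
    cases U with
    | nil =>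
      refine ⟨D.map (fun iv => (iv, false)), mChL_map_mk false hD, mBdd_map_mk false hbD, ?_⟩
      rw [List.map_map]
      have : (mval ψ c ∘ fun iv => (iv, false)) = dval ψ c := by
        funext iv; simp [mval]
      rw [this]; simp
    | cons u U' =>
      cases D with
      | nil =>
        refine ⟨(u :: U').map (fun iv => (iv, true)), mChL_map_mk true hU,
          mBdd_map_mk true hbU, ?_⟩
        rw [List.map_map]
        have : (mval ψ c ∘ fun iv => (iv, true)) = uval ψ c := by
          funext iv; simp [mval]
        rw [this]; simp
      | cons d D' =>
        rcases le_or_gt u.1 d.1 with h1 | h1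
        · exact coreStep c hc K IH ψ u d U' D' lo hi hlen hU hD hbU hbD h1
        · obtain ⟨L, hL, hbL, hsum⟩ := coreStep c hc K IH (fun x => -ψ x) d u D' U' lo hi
            (by simp only [List.length_cons] at hlen ⊢; omega) hD hU hbD hbU h1.le
          refine ⟨L.map (fun m => (m.1, !m.2)), ?_, ?_, ?_⟩
          · constructor
            · exact List.pairwise_map.mpr hL.1
            · intro m hm
              obtain ⟨m', hm', rfl⟩ := List.mem_map.1 hm
              exact hL.2 m' hm'
          · intro m hm
            obtain ⟨m', hm', rfl⟩ := List.mem_map.1 hm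
            exact hbL m' hm'
          · have e1 : uval (fun x => -ψ x) c = dval ψ c := funext (uval_neg ψ c)
            have e2 : dval (fun x => -ψ x) c = uval ψ c := funext (dval_neg ψ c)
            rw [e1, e2] at hsum
            rw [List.map_map]
            have e3 : (mval ψ c ∘ fun m => (m.1, !m.2)) = mval (fun x => -ψ x) c :=
              funext (mval_neg ψ c)
            rw [e3]
            linarith

theorem conv (ψ : ℝ → ℝ) (c b : ℝ) :
    ∀ (L : List ((ℝ × ℝ) × Bool)), MChL L → ∀ β : ℝ, β ≤ b →
      (∀ m ∈ L, β ≤ m.1.1) → (∀ m ∈ L, m.1.2 ≤ b) →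
      ∃ (n : ℕ) (t : ℕ → ℝ), (∀ i, i < n → t i < t (i + 1)) ∧ β ≤ t 0 ∧ t n ≤ b ∧
        (L.map (mval ψ c)).sum
          ≤ ∑ i ∈ Finset.range n, max (|ψ (t (i + 1)) - ψ (t i)| - c) 0 := by
  intro L
  induction L with
  | nil =>
    intro _ β hβ _ _
    exact ⟨0, fun _ => β, fun i hi => absurd hi (Nat.not_lt_zero i), le_rfl, hβ, by simp⟩
  | cons m L' ih =>
    intro hL β hβb hβ hhib
    obtain ⟨hhead, hmv, hL'⟩ := mChL_cons.1 hL
    have hm2b : m.1.2 ≤ b := hhib m List.mem_cons_self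
    obtain ⟨n', t', ht', hβ', htn', hsum'⟩ :=
      ih hL' m.1.2 hm2b hhead (fun x hx => hhib x (List.mem_cons_of_mem _ hx))
    have hmval : mval ψ c m ≤ max (|ψ m.1.2 - ψ m.1.1| - c) 0 := by
      rcases m with ⟨iv, b'⟩
      have h1 : ψ iv.2 - ψ iv.1 ≤ |ψ iv.2 - ψ iv.1| := le_abs_self _
      have h2 : ψ iv.1 - ψ iv.2 ≤ |ψ iv.2 - ψ iv.1| := by
        rw [abs_sub_comm]; exact le_abs_self _
      have h3 := le_max_left (|ψ iv.2 - ψ iv.1| - c) (0:ℝ)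
      cases b'
      · show dval ψ c iv ≤ max (|ψ iv.2 - ψ iv.1| - c) 0
        simp only [dval]; linarith
      · show uval ψ c iv ≤ max (|ψ iv.2 - ψ iv.1| - c) 0
        simp only [uval]; linarith
    rcases eq_or_lt_of_le hβ' with heq | hlt
    · refine ⟨n' + 1, fun i => Nat.casesOn i m.1.1 t', ?_,
        hβ m List.mem_cons_self, htn', ?_⟩
      · intro i hi
        cases i with
        | zero => show m.1.1 < t' 0; rw [← heq]; exact hmv
        | succ j => exact ht' j (by omega)
      · rw [Finset.sum_range_succ']
        have hcg : ∀ i ∈ Finset.range n',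
            max (|ψ ((fun i => Nat.casesOn i m.1.1 t' : ℕ → ℝ) (i + 1 + 1))
              - ψ ((fun i => Nat.casesOn i m.1.1 t' : ℕ → ℝ) (i + 1))| - c) 0
            = max (|ψ (t' (i + 1)) - ψ (t' i)| - c) 0 := fun i _ => rfl
        rw [Finset.sum_congr rfl hcg]
        simp only [List.map_cons, List.sum_cons]
        have h0 : max (|ψ ((fun i => Nat.casesOn i m.1.1 t' : ℕ → ℝ) (0 + 1))
            - ψ ((fun i => Nat.casesOn i m.1.1 t' : ℕ → ℝ) 0)| - c) 0
            = max (|ψ m.1.2 - ψ m.1.1| - c) 0 := by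
          show max (|ψ (t' 0) - ψ m.1.1| - c) 0 = _
          rw [← heq]
        rw [h0]
        linarith
    · refine ⟨n' + 2, fun i => Nat.casesOn i m.1.1 (fun j => Nat.casesOn j m.1.2 t'), ?_,
        hβ m List.mem_cons_self, htn', ?_⟩
      · intro i hi
        match i with
        | 0 => exact hmv
        | 1 => exact hlt
        | (j+2) => exact ht' j (by omega)
      · rw [Finset.sum_range_succ', Finset.sum_range_succ']
        have hcg : ∀ i ∈ Finset.range n',
            max (|ψ ((fun i => Nat.casesOn i m.1.1 (fun j => Nat.casesOn j m.1.2 t') : ℕ → ℝ)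
              (i + 1 + 1 + 1))
              - ψ ((fun i => Nat.casesOn i m.1.1 (fun j => Nat.casesOn j m.1.2 t') : ℕ → ℝ)
              (i + 1 + 1))| - c) 0
            = max (|ψ (t' (i + 1)) - ψ (t' i)| - c) 0 := fun i _ => rfl
        rw [Finset.sum_congr rfl hcg]
        simp only [List.map_cons, List.sum_cons]
        have h0 : (0:ℝ) ≤ max (|ψ (t' 0) - ψ m.1.2| - c) 0 := le_max_right _ _
        have h1 : mval ψ c m ≤ max (|ψ m.1.2 - ψ m.1.1| - c) 0 := hmval
        show mval ψ c m + (List.map (mval ψ c) L').sum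
          ≤ (∑ i ∈ Finset.range n', max (|ψ (t' (i + 1)) - ψ (t' i)| - c) 0)
            + max (|ψ (t' 0) - ψ m.1.2| - c) 0 + max (|ψ m.1.2 - ψ m.1.1| - c) 0
        linarith

lemma t_mono {n : ℕ} {t : ℕ → ℝ} (ht : ∀ i, i < n → t i < t (i + 1)) :
    ∀ j, j ≤ n → ∀ i, i ≤ j → t i ≤ t j := by
  intro j
  induction j with
  | zero =>
    intro _ i hi
    have : i = 0 := by omega
    rw [this]
  | succ j ihj =>
    intro hjn i hij
    rcases Nat.eq_or_lt_of_le hij with rfl | h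
    · exact le_rfl
    · exact le_trans (ihj (by omega) i (by omega)) (ht j (by omega)).le

lemma chL_of_partition {n : ℕ} {t : ℕ → ℝ} (ht : ∀ i, i < n → t i < t (i + 1)) :
    ChL ((List.range n).map fun i => (t i, t (i + 1))) := by
  constructor
  · rw [List.pairwise_map]
    refine List.pairwise_lt_range.imp_of_mem ?_
    intro a b ha hb hab
    have ha' := List.mem_range.1 ha
    have hb' := List.mem_range.1 hb
    show t (a + 1) ≤ t b
    exact t_mono ht b (by omega) (a + 1) (by omega)
  · intro iv hiv
    obtain ⟨i, hi, rfl⟩ := List.mem_map.1 hiv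
    exact ht i (List.mem_range.1 hi)

lemma bdd_of_partition {n : ℕ} {t : ℕ → ℝ} {a b : ℝ} (ht : ∀ i, i < n → t i < t (i + 1))
    (h0 : a ≤ t 0) (hn : t n ≤ b) :
    Bdd a b ((List.range n).map fun i => (t i, t (i + 1))) := by
  intro iv hiv
  obtain ⟨i, hi, rfl⟩ := List.mem_map.1 hiv
  have hi' := List.mem_range.1 hi
  exact ⟨le_trans h0 (t_mono ht i (by omega) 0 (by omega)),
    le_trans (t_mono ht n (le_refl n) (i + 1) (by omega)) hn⟩

lemma chL_filter {l : List (ℝ × ℝ)} (p : ℝ × ℝ → Bool) (hl : ChL l) : ChL (l.filter p) :=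
  ⟨hl.1.sublist List.filter_sublist, fun iv h => hl.2 iv (List.mem_of_mem_filter h)⟩

lemma bdd_filter {l : List (ℝ × ℝ)} {lo hi : ℝ} (p : ℝ × ℝ → Bool) (hb : Bdd lo hi l) :
    Bdd lo hi (l.filter p) := fun iv h => hb iv (List.mem_of_mem_filter h)

lemma sum_max_filter (g : ℝ × ℝ → ℝ) (l : List (ℝ × ℝ)) :
    ((l.filter fun iv => decide (0 ≤ g iv)).map g).sum = (l.map fun iv => max (g iv) 0).sum := by
  induction l with
  | nil => simp
  | cons iv l ih =>
    by_cases h : 0 ≤ g iv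
    · rw [List.filter_cons_of_pos (by simpa using h)]
      simp only [List.map_cons, List.sum_cons, ih, max_eq_left h]
    · rw [List.filter_cons_of_neg (by simpa using h)]
      simp only [List.map_cons, List.sum_cons, ih, max_eq_right (le_of_not_ge h)]
      ring

lemma list_range_sum (g : ℕ → ℝ) (n : ℕ) :
    ((List.range n).map g).sum = ∑ i ∈ Finset.range n, g i := by
  induction n with
  | zero => simp
  | succ n ih => rw [List.range_succ, Finset.sum_range_succ, List.map_append]; simp [ih]

def Part (a b : ℝ) : Type :=
  {q : ℕ × (ℕ → ℝ) // (∀ i, i < q.1 → q.2 i < q.2 (i + 1)) ∧ a ≤ q.2 0 ∧ q.2 q.1 ≤ b}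

lemma part_nonempty {a b : ℝ} (hab : a ≤ b) : Nonempty (Part a b) :=
  ⟨⟨(0, fun _ => a), fun i hi => absurd hi (Nat.not_lt_zero i), le_rfl, hab⟩⟩

lemma genVar_eq (f : ℝ → ℝ → ℝ) (a b : ℝ) :
    genVar f a b = ⨆ p : Part a b,
      ENNReal.ofReal (∑ i ∈ Finset.range p.1.1, f (p.1.2 i) (p.1.2 (i + 1))) := by
  rw [genVar]
  apply le_antisymm
  · refine iSup_le fun n => iSup_le fun t => iSup_le fun h => ?_
    exact le_iSup_of_le (⟨(n, t), h⟩ : Part a b) le_rfl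
  · refine iSup_le fun p => ?_
    exact le_iSup_of_le p.1.1 (le_iSup_of_le p.1.2 (le_iSup_of_le p.2 le_rfl))

lemma max_abs_split {x c : ℝ} (hc : 0 ≤ c) :
    max (|x| - c) 0 = max (x - c) 0 + max (-x - c) 0 := by
  rcases le_total 0 x with h | h
  · rw [abs_of_nonneg h, max_eq_right (by linarith : -x - c ≤ (0:ℝ))]; ring
  · rw [abs_of_nonpos h, max_eq_right (by linarith : x - c ≤ (0:ℝ))]; ring

theorem easy (ψ : ℝ → ℝ) (c : ℝ) (hc : 0 ≤ c) (a b : ℝ) :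
    TVc ψ c a b ≤ UTVc ψ c a b + DTVc ψ c a b := by
  rw [TVc, genVar]
  refine iSup_le fun n => iSup_le fun t => iSup_le fun h => ?_
  have hsplit : (∑ i ∈ Finset.range n, max (|ψ (t (i + 1)) - ψ (t i)| - c) 0)
      = (∑ i ∈ Finset.range n, max (ψ (t (i + 1)) - ψ (t i) - c) 0)
        + ∑ i ∈ Finset.range n, max (ψ (t i) - ψ (t (i + 1)) - c) 0 := by
    rw [← Finset.sum_add_distrib]
    refine Finset.sum_congr rfl fun i _ => ?_
    have h1 := max_abs_split (x := ψ (t (i + 1)) - ψ (t i)) hc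
    have h2 : -(ψ (t (i + 1)) - ψ (t i)) - c = ψ (t i) - ψ (t (i + 1)) - c := by ring
    rw [h1, h2]
  rw [hsplit, ENNReal.ofReal_add (Finset.sum_nonneg fun i _ => le_max_right _ _)
    (Finset.sum_nonneg fun i _ => le_max_right _ _)]
  apply add_le_add
  · rw [UTVc, genVar]
    exact le_iSup_of_le n (le_iSup_of_le t (le_iSup_of_le h le_rfl))
  · rw [DTVc, genVar]
    exact le_iSup_of_le n (le_iSup_of_le t (le_iSup_of_le h le_rfl))

theorem hard (ψ : ℝ → ℝ) (c : ℝ) (hc : 0 ≤ c) (a b : ℝ) (hab : a ≤ b) :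
    UTVc ψ c a b + DTVc ψ c a b ≤ TVc ψ c a b := by
  haveI : Nonempty (Part a b) := part_nonempty hab
  rw [UTVc, DTVc, genVar_eq, genVar_eq]
  refine ENNReal.iSup_add_iSup_le fun p q => ?_
  obtain ⟨⟨n₁, t₁⟩, h₁s, h₁0, h₁n⟩ := p
  obtain ⟨⟨n₂, t₂⟩, h₂s, h₂0, h₂n⟩ := q
  obtain ⟨L, hL, hbL, hsum⟩ := core c hc
    ((((List.range n₁).map fun i => (t₁ i, t₁ (i + 1))).filter
        fun iv => decide (0 ≤ uval ψ c iv)).length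
      + (((List.range n₂).map fun i => (t₂ i, t₂ (i + 1))).filter
        fun iv => decide (0 ≤ dval ψ c iv)).length) ψ
    (((List.range n₁).map fun i => (t₁ i, t₁ (i + 1))).filter
        fun iv => decide (0 ≤ uval ψ c iv))
    (((List.range n₂).map fun i => (t₂ i, t₂ (i + 1))).filter
        fun iv => decide (0 ≤ dval ψ c iv)) a b le_rfl
    (chL_filter _ (chL_of_partition h₁s)) (chL_filter _ (chL_of_partition h₂s))
    (bdd_filter _ (bdd_of_partition h₁s h₁0 h₁n)) (bdd_filter _ (bdd_of_partition h₂s h₂0 h₂n))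
  obtain ⟨n₃, t₃, h₃s, h₃0, h₃n, hsum₃⟩ := conv ψ c b L hL a hab
    (fun m hm => (hbL m hm).1) (fun m hm => (hbL m hm).2)
  have hS1 : ((((List.range n₁).map fun i => (t₁ i, t₁ (i + 1))).filter
        fun iv => decide (0 ≤ uval ψ c iv)).map (uval ψ c)).sum
      = ∑ i ∈ Finset.range n₁, max (ψ (t₁ (i + 1)) - ψ (t₁ i) - c) 0 := by
    rw [sum_max_filter, List.map_map, list_range_sum]
    rfl
  have hS2 : ((((List.range n₂).map fun i => (t₂ i, t₂ (i + 1))).filter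
        fun iv => decide (0 ≤ dval ψ c iv)).map (dval ψ c)).sum
      = ∑ i ∈ Finset.range n₂, max (ψ (t₂ i) - ψ (t₂ (i + 1)) - c) 0 := by
    rw [sum_max_filter, List.map_map, list_range_sum]
    rfl
  have hnn1 : (0:ℝ) ≤ ∑ i ∈ Finset.range n₁, max (ψ (t₁ (i + 1)) - ψ (t₁ i) - c) 0 :=
    Finset.sum_nonneg fun i _ => le_max_right _ _
  have hnn2 : (0:ℝ) ≤ ∑ i ∈ Finset.range n₂, max (ψ (t₂ i) - ψ (t₂ (i + 1)) - c) 0 :=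
    Finset.sum_nonneg fun i _ => le_max_right _ _
  calc ENNReal.ofReal (∑ i ∈ Finset.range n₁, max (ψ (t₁ (i + 1)) - ψ (t₁ i) - c) 0)
        + ENNReal.ofReal (∑ i ∈ Finset.range n₂, max (ψ (t₂ i) - ψ (t₂ (i + 1)) - c) 0)
      = ENNReal.ofReal ((∑ i ∈ Finset.range n₁, max (ψ (t₁ (i + 1)) - ψ (t₁ i) - c) 0)
        + ∑ i ∈ Finset.range n₂, max (ψ (t₂ i) - ψ (t₂ (i + 1)) - c) 0) :=
      (ENNReal.ofReal_add hnn1 hnn2).symm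
    _ ≤ ENNReal.ofReal (∑ i ∈ Finset.range n₃, max (|ψ (t₃ (i + 1)) - ψ (t₃ i)| - c) 0) := by
      apply ENNReal.ofReal_le_ofReal
      rw [← hS1, ← hS2]
      linarith
    _ ≤ TVc ψ c a b := by
      rw [TVc, genVar]
      exact le_iSup_of_le n₃ (le_iSup_of_le t₃ (le_iSup_of_le ⟨h₃s, h₃0, h₃n⟩ le_rfl))

end Stmt3Aux

/-- for a regulated function the truncated variation splits as
the sum of the upward and downward truncated variations. -/
theorem stmt3 (ψ : ℝ → ℝ) (hreg : Regulated 0 ψ)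
    (a b : ℝ) (ha : 0 ≤ a) (hab : a < b) (c : ℝ) (hc : 0 < c) :
    TVc ψ c a b = UTVc ψ c a b + DTVc ψ c a b := by
  exact le_antisymm (Stmt3Aux.easy ψ c hc.le a b) (Stmt3Aux.hard ψ c hc.le a b hab.le)
end

section
/- A function ψ : [a,b] → ℝ is regulated if and only if for every c > 0 the truncated variation TV^c(ψ,[a,b]) is finite. -/
open Filter Set Topology
open scoped ENNReal

lemma my_le_genVar (f : ℝ → ℝ → ℝ) (a b : ℝ) (n : ℕ) (t : ℕ → ℝ)
    (h : (∀ i, i < n → t i < t (i + 1)) ∧ a ≤ t 0 ∧ t n ≤ b) :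
    ENNReal.ofReal (∑ i ∈ Finset.range n, f (t i) (t (i + 1))) ≤ genVar f a b :=
  le_iSup_of_le n (le_iSup_of_le t (le_iSup_of_le h le_rfl))

lemma my_genVar_le (f : ℝ → ℝ → ℝ) (a b C : ℝ)
    (h : ∀ n (t : ℕ → ℝ), (∀ i, i < n → t i < t (i + 1)) → a ≤ t 0 → t n ≤ b →
      (∑ i ∈ Finset.range n, f (t i) (t (i + 1))) ≤ C) :
    genVar f a b ≤ ENNReal.ofReal C := by
  refine iSup_le fun n => iSup_le fun t => iSup_le fun hc => ?_
  exact ENNReal.ofReal_le_ofReal (h n t hc.1 hc.2.1 hc.2.2)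

lemma my_mono {z : ℕ → ℝ} {N : ℕ} (h : ∀ j, j < N → z j < z (j+1)) :
    ∀ i j, i < j → j ≤ N → z i < z j := by
  intro i j hij hjN
  induction j with
  | zero => omega
  | succ k ih =>
    rcases Nat.lt_succ_iff_lt_or_eq.mp hij with h' | h'
    · exact lt_trans (ih h' (by omega)) (h k (by omega))
    · subst h'; exact h i (by omega)

lemma my_locate {z : ℕ → ℝ} {N : ℕ} {w : ℝ}
    (h0 : z 0 ≤ w) (hN : w ≤ z N) :
    (∃ j, j ≤ N ∧ w = z j) ∨ (∃ j, j < N ∧ z j < w ∧ w < z (j+1)) := by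
  classical
  have hex : ∃ j, j ≤ N ∧ w ≤ z j := ⟨N, le_rfl, hN⟩
  obtain ⟨hjN, hjw⟩ := Nat.find_spec hex
  rcases eq_or_lt_of_le hjw with h | h
  · exact Or.inl ⟨Nat.find hex, hjN, h⟩
  · right
    have hj0 : Nat.find hex ≠ 0 := by
      intro h0'
      rw [h0'] at h
      exact absurd h0 (not_le.mpr h)
    obtain ⟨j', hj'⟩ := Nat.exists_eq_succ_of_ne_zero hj0
    have hmin : ¬ (j' ≤ N ∧ w ≤ z j') := Nat.find_min hex (by omega)
    push_neg at hmin
    have hj'N : j' + 1 ≤ N := by omega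
    refine ⟨j', by omega, hmin (by omega), by rw [show j' + 1 = Nat.find hex by omega]; exact h⟩

/-- If there are infinitely many disjoint pairs (descending) in [a,b]
with oscillation at least ε, then TVc with c < ε is infinite. -/
lemma my_blowup (ψ : ℝ → ℝ) (c ε a b : ℝ) (hc : c < ε)
    (u v : ℕ → ℝ)
    (hb : ∀ k, a ≤ u k ∧ u k < v k ∧ v k ≤ b ∧ ε ≤ |ψ (v k) - ψ (u k)|)
    (hdesc : ∀ k, v (k+1) < u k)
    (hfin : TVc ψ c a b < ⊤) : False := by
  classical
  set q : ℕ → ℝ := fun j => if j % 2 = 0 then v (j/2) else u (j/2) with hq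
  have hqv : ∀ r, q (2*r) = v r := by intro r; simp only [hq]; rw [if_pos (by omega)]; congr 1; omega
  have hqu : ∀ r, q (2*r+1) = u r := by intro r; simp only [hq]; rw [if_neg (by omega)]; congr 1; omega
  have hqstep : ∀ j, q (j+1) < q j := by
    intro j
    rcases Nat.even_or_odd j with ⟨r, hr⟩ | ⟨r, hr⟩
    · have h1 : q j = v r := by rw [show j = 2*r by omega]; exact hqv r
      have h2 : q (j+1) = u r := by rw [show j+1 = 2*r+1 by omega]; exact hqu r
      rw [h1, h2]; exact (hb r).2.1
    · have h1 : q j = u r := by rw [show j = 2*r+1 by omega]; exact hqu r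
      have h2 : q (j+1) = v (r+1) := by rw [show j+1 = 2*(r+1) by omega]; exact hqv (r+1)
      rw [h1, h2]; exact hdesc r
  have hqmono : ∀ i j, i < j → q j < q i := by
    intro i j hij
    induction j with
    | zero => omega
    | succ k ih =>
      rcases Nat.lt_succ_iff_lt_or_eq.mp hij with h' | h'
      · exact lt_trans (hqstep k) (ih h')
      · subst h'; exact hqstep i
  -- key estimate for each m ≥ 1
  have key : ∀ m : ℕ, 1 ≤ m →
      ENNReal.ofReal ((m : ℝ) * (ε - c)) ≤ TVc ψ c a b := by
    intro m hm
    set n : ℕ := 2*m - 1 with hn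
    set t : ℕ → ℝ := fun i => q (n - i) with ht
    have hinc : ∀ i, i < n → t i < t (i+1) := by
      intro i hi
      simp only [ht]
      have : n - i = (n - (i+1)) + 1 := by omega
      rw [this]
      exact hqstep _
    have ht0 : a ≤ t 0 := by
      simp only [ht, Nat.sub_zero, hn]
      rw [show 2*m - 1 = 2*(m-1)+1 by omega, hqu]
      exact (hb _).1
    have htn : t n ≤ b := by
      simp only [ht, Nat.sub_self]
      rw [show (0:ℕ) = 2*0 by omega, hqv]
      exact (hb 0).2.2.1
    have hsum : (m : ℝ) * (ε - c) ≤
        ∑ i ∈ Finset.range n, max (|ψ (t (i+1)) - ψ (t i)| - c) 0 := by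
      have hsub : (Finset.range m).image (fun j => 2*j) ⊆ Finset.range n := by
        intro i hi
        simp only [Finset.mem_image, Finset.mem_range] at hi ⊢
        omega
      have h1 : ∑ j ∈ (Finset.range m).image (fun j => 2*j),
            max (|ψ (t (j+1)) - ψ (t j)| - c) 0
          ≤ ∑ i ∈ Finset.range n, max (|ψ (t (i+1)) - ψ (t i)| - c) 0 :=
        Finset.sum_le_sum_of_subset_of_nonneg hsub (fun i _ _ => le_max_right _ _)
      have h2 : ∑ j ∈ (Finset.range m).image (fun j => 2*j),
            max (|ψ (t (j+1)) - ψ (t j)| - c) 0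
          = ∑ j ∈ Finset.range m, max (|ψ (t (2*j+1)) - ψ (t (2*j))| - c) 0 := by
        rw [Finset.sum_image (by intro x _ y _ h; simp only at h; omega)]
      have h3 : ∀ j ∈ Finset.range m, ε - c ≤ max (|ψ (t (2*j+1)) - ψ (t (2*j))| - c) 0 := by
        intro j hj
        rw [Finset.mem_range] at hj
        have e1 : t (2*j) = u (m-1-j) := by
          simp only [ht]
          rw [show n - 2*j = 2*(m-1-j)+1 by omega, hqu]
        have e2 : t (2*j+1) = v (m-1-j) := by
          simp only [ht]
          rw [show n - (2*j+1) = 2*(m-1-j) by omega, hqv]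
        rw [e1, e2]
        refine le_max_of_le_left ?_
        have := (hb (m-1-j)).2.2.2
        linarith
      calc (m : ℝ) * (ε - c)
          ≤ ∑ j ∈ Finset.range m, max (|ψ (t (2*j+1)) - ψ (t (2*j))| - c) 0 := by
            have := Finset.card_nsmul_le_sum (Finset.range m)
              (fun j => max (|ψ (t (2*j+1)) - ψ (t (2*j))| - c) 0) (ε - c) h3
            simpa [nsmul_eq_mul] using this
        _ = _ := h2.symm
        _ ≤ _ := h1
    calc ENNReal.ofReal ((m : ℝ) * (ε - c)) ≤
        ENNReal.ofReal (∑ i ∈ Finset.range n,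
          max (|ψ (t (i+1)) - ψ (t i)| - c) 0) := ENNReal.ofReal_le_ofReal hsum
      _ ≤ TVc ψ c a b := my_le_genVar _ a b n t ⟨hinc, ht0, htn⟩
  -- derive the contradiction
  have hεc : 0 < ε - c := by linarith
  obtain ⟨m0, hm0⟩ := exists_nat_gt ((TVc ψ c a b).toReal / (ε - c))
  have hle := key (m0 + 1) (by omega)
  rw [ENNReal.ofReal_le_iff_le_toReal hfin.ne] at hle
  have h1 : (TVc ψ c a b).toReal / (ε - c) < (m0 + 1 : ℕ) := by
    push_cast; linarith
  rw [div_lt_iff₀ hεc] at h1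
  linarith

lemma my_blowup_asc (ψ : ℝ → ℝ) (c ε a b : ℝ) (hc : c < ε)
    (u v : ℕ → ℝ)
    (hb : ∀ k, a ≤ u k ∧ u k < v k ∧ v k ≤ b ∧ ε ≤ |ψ (v k) - ψ (u k)|)
    (hasc : ∀ k, v k < u (k+1))
    (hfin : TVc ψ c a b < ⊤) : False := by
  classical
  set q : ℕ → ℝ := fun j => if j % 2 = 0 then u (j/2) else v (j/2) with hq
  have hqu : ∀ r, q (2*r) = u r := by intro r; simp only [hq]; rw [if_pos (by omega)]; congr 1; omega
  have hqv : ∀ r, q (2*r+1) = v r := by intro r; simp only [hq]; rw [if_neg (by omega)]; congr 1; omega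
  have hqstep : ∀ j, q j < q (j+1) := by
    intro j
    rcases Nat.even_or_odd j with ⟨r, hr⟩ | ⟨r, hr⟩
    · have h1 : q j = u r := by rw [show j = 2*r by omega]; exact hqu r
      have h2 : q (j+1) = v r := by rw [show j+1 = 2*r+1 by omega]; exact hqv r
      rw [h1, h2]; exact (hb r).2.1
    · have h1 : q j = v r := by rw [show j = 2*r+1 by omega]; exact hqv r
      have h2 : q (j+1) = u (r+1) := by rw [show j+1 = 2*(r+1) by omega]; exact hqu (r+1)
      rw [h1, h2]; exact hasc r
  have key : ∀ m : ℕ, 1 ≤ m →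
      ENNReal.ofReal ((m : ℝ) * (ε - c)) ≤ TVc ψ c a b := by
    intro m hm
    set n : ℕ := 2*m - 1 with hn
    have hinc : ∀ i, i < n → q i < q (i+1) := fun i _ => hqstep i
    have ht0 : a ≤ q 0 := by
      rw [show (0:ℕ) = 2*0 by omega, hqu]; exact (hb 0).1
    have htn : q n ≤ b := by
      rw [show n = 2*(m-1)+1 by omega, hqv]; exact (hb _).2.2.1
    have hsum : (m : ℝ) * (ε - c) ≤
        ∑ i ∈ Finset.range n, max (|ψ (q (i+1)) - ψ (q i)| - c) 0 := by
      have hsub : (Finset.range m).image (fun j => 2*j) ⊆ Finset.range n := by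
        intro i hi
        simp only [Finset.mem_image, Finset.mem_range] at hi ⊢
        omega
      have h1 : ∑ j ∈ (Finset.range m).image (fun j => 2*j),
            max (|ψ (q (j+1)) - ψ (q j)| - c) 0
          ≤ ∑ i ∈ Finset.range n, max (|ψ (q (i+1)) - ψ (q i)| - c) 0 :=
        Finset.sum_le_sum_of_subset_of_nonneg hsub (fun i _ _ => le_max_right _ _)
      have h2 : ∑ j ∈ (Finset.range m).image (fun j => 2*j),
            max (|ψ (q (j+1)) - ψ (q j)| - c) 0
          = ∑ j ∈ Finset.range m, max (|ψ (q (2*j+1)) - ψ (q (2*j))| - c) 0 := by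
        rw [Finset.sum_image (by intro x _ y _ h; simp only at h; omega)]
      have h3 : ∀ j ∈ Finset.range m, ε - c ≤ max (|ψ (q (2*j+1)) - ψ (q (2*j))| - c) 0 := by
        intro j _
        rw [hqu, hqv]
        refine le_max_of_le_left ?_
        have := (hb j).2.2.2
        linarith
      calc (m : ℝ) * (ε - c)
          ≤ ∑ j ∈ Finset.range m, max (|ψ (q (2*j+1)) - ψ (q (2*j))| - c) 0 := by
            have := Finset.card_nsmul_le_sum (Finset.range m)
              (fun j => max (|ψ (q (2*j+1)) - ψ (q (2*j))| - c) 0) (ε - c) h3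
            simpa [nsmul_eq_mul] using this
        _ = _ := h2.symm
        _ ≤ _ := h1
    calc ENNReal.ofReal ((m : ℝ) * (ε - c)) ≤
        ENNReal.ofReal (∑ i ∈ Finset.range n,
          max (|ψ (q (i+1)) - ψ (q i)| - c) 0) := ENNReal.ofReal_le_ofReal hsum
      _ ≤ TVc ψ c a b := my_le_genVar _ a b n q ⟨hinc, ht0, htn⟩
  have hεc : 0 < ε - c := by linarith
  obtain ⟨m0, hm0⟩ := exists_nat_gt ((TVc ψ c a b).toReal / (ε - c))
  have hle := key (m0 + 1) (by omega)
  rw [ENNReal.ofReal_le_iff_le_toReal hfin.ne] at hle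
  have h1 : (TVc ψ c a b).toReal / (ε - c) < (m0 + 1 : ℕ) := by
    push_cast; linarith
  rw [div_lt_iff₀ hεc] at h1
  linarith

lemma my_pairs_right (ψ : ℝ → ℝ) (x b ε : ℝ) (hxb : x < b) (hε : 0 < ε)
    (H : ∀ s ∈ 𝓝[>] x, ∃ p ∈ s, ∃ q ∈ s, ε ≤ |ψ q - ψ p|) :
    ∃ u v : ℕ → ℝ, (∀ k, x < u k ∧ u k < v k ∧ v k < b ∧ ε ≤ |ψ (v k) - ψ (u k)|) ∧
      ∀ k, v (k+1) < u k := by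
  classical
  have step : ∀ y : ℝ, x < y →
      ∃ p : ℝ × ℝ, x < p.1 ∧ p.1 < p.2 ∧ p.2 < y ∧ ε ≤ |ψ p.2 - ψ p.1| := by
    intro y hy
    obtain ⟨p, hp, q, hq, hpq⟩ := H (Ioo x y) (Ioo_mem_nhdsGT_of_mem ⟨le_refl x, hy⟩)
    rcases lt_trichotomy p q with h | h | h
    · exact ⟨(p, q), hp.1, h, hq.2, hpq⟩
    · subst h; simp at hpq; linarith
    · exact ⟨(q, p), hq.1, h, hp.2, by rwa [abs_sub_comm]⟩
  choose! pf h1 h2 h3 h4 using step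
  set g : ℕ → ℝ × ℝ := fun k => Nat.rec (pf b) (fun _ p => pf p.1) k with hg
  have hgs : ∀ k, g (k+1) = pf (g k).1 := fun k => rfl
  have inv : ∀ k, x < (g k).1 ∧ (g k).1 < (g k).2 ∧ (g k).2 < b ∧
      ε ≤ |ψ (g k).2 - ψ (g k).1| := by
    intro k
    induction k with
    | zero => exact ⟨h1 b hxb, h2 b hxb, h3 b hxb, h4 b hxb⟩
    | succ n ih =>
      rw [hgs]
      refine ⟨h1 _ ih.1, h2 _ ih.1, ?_, h4 _ ih.1⟩
      exact lt_trans (h3 _ ih.1) (lt_trans ih.2.1 ih.2.2.1)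
  refine ⟨fun k => (g k).1, fun k => (g k).2, inv, fun k => ?_⟩
  show (g (k+1)).2 < (g k).1
  rw [hgs]
  exact h3 _ (inv k).1

lemma my_pairs_left (ψ : ℝ → ℝ) (a x ε : ℝ) (hax : a < x) (hε : 0 < ε)
    (H : ∀ s ∈ 𝓝[<] x, ∃ p ∈ s, ∃ q ∈ s, ε ≤ |ψ q - ψ p|) :
    ∃ u v : ℕ → ℝ, (∀ k, a < u k ∧ u k < v k ∧ v k < x ∧ ε ≤ |ψ (v k) - ψ (u k)|) ∧
      ∀ k, v k < u (k+1) := by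
  classical
  have step : ∀ y : ℝ, y < x →
      ∃ p : ℝ × ℝ, y < p.1 ∧ p.1 < p.2 ∧ p.2 < x ∧ ε ≤ |ψ p.2 - ψ p.1| := by
    intro y hy
    obtain ⟨p, hp, q, hq, hpq⟩ := H (Ioo y x) (Ioo_mem_nhdsLT_of_mem ⟨hy, le_refl x⟩)
    rcases lt_trichotomy p q with h | h | h
    · exact ⟨(p, q), hp.1, h, hq.2, hpq⟩
    · subst h; simp at hpq; linarith
    · exact ⟨(q, p), hq.1, h, hp.2, by rwa [abs_sub_comm]⟩
  choose! pf h1 h2 h3 h4 using step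
  set g : ℕ → ℝ × ℝ := fun k => Nat.rec (pf a) (fun _ p => pf p.2) k with hg
  have hgs : ∀ k, g (k+1) = pf (g k).2 := fun k => rfl
  have inv : ∀ k, a < (g k).1 ∧ (g k).1 < (g k).2 ∧ (g k).2 < x ∧
      ε ≤ |ψ (g k).2 - ψ (g k).1| := by
    intro k
    induction k with
    | zero => exact ⟨h1 a hax, h2 a hax, h3 a hax, h4 a hax⟩
    | succ n ih =>
      rw [hgs]
      refine ⟨?_, h2 _ ih.2.2.1, h3 _ ih.2.2.1, h4 _ ih.2.2.1⟩
      exact lt_trans (lt_trans ih.1 ih.2.1) (h1 _ ih.2.2.1)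
  refine ⟨fun k => (g k).1, fun k => (g k).2, inv, fun k => ?_⟩
  show (g k).2 < (g (k+1)).1
  rw [hgs]
  exact h1 _ (inv k).2.2.1

/-- A partition of `[a,y]` on whose open subintervals `ψ` oscillates by at most `c`. -/
def MyChain (ψ : ℝ → ℝ) (c a y : ℝ) : Prop :=
  ∃ N : ℕ, ∃ z : ℕ → ℝ, z 0 = a ∧ z N = y ∧ (∀ j, j < N → z j < z (j+1)) ∧
    (∀ j, j < N → ∀ u ∈ Ioo (z j) (z (j+1)), ∀ v ∈ Ioo (z j) (z (j+1)), |ψ u - ψ v| ≤ c)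

lemma my_extend {ψ : ℝ → ℝ} {c a y w : ℝ}
    (h : MyChain ψ c a y) (hyw : y < w)
    (hosc : ∀ u ∈ Ioo y w, ∀ v ∈ Ioo y w, |ψ u - ψ v| ≤ c) : MyChain ψ c a w := by
  obtain ⟨N, z, h0, hN, hinc, hos⟩ := h
  refine ⟨N + 1, fun i => if i ≤ N then z i else w, by simpa using h0, by simp, ?_, ?_⟩
  · intro j hj
    show (if j ≤ N then z j else w) < (if j + 1 ≤ N then z (j+1) else w)
    rcases Nat.lt_succ_iff_lt_or_eq.mp hj with h' | h'
    · rw [if_pos (by omega), if_pos (by omega)]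
      exact hinc j h'
    · subst h'
      rw [if_pos le_rfl, if_neg (by omega), hN]
      exact hyw
  · intro j hj
    show ∀ u ∈ Ioo (if j ≤ N then z j else w) (if j + 1 ≤ N then z (j+1) else w),
      ∀ v ∈ Ioo (if j ≤ N then z j else w) (if j + 1 ≤ N then z (j+1) else w), |ψ u - ψ v| ≤ c
    rcases Nat.lt_succ_iff_lt_or_eq.mp hj with h' | h'
    · rw [if_pos (by omega), if_pos (by omega)]
      exact hos j h'
    · subst h'
      rw [if_pos le_rfl, if_neg (by omega), hN]
      exact hosc

lemma my_osc_of_tendsto {ψ : ℝ → ℝ} {c : ℝ} (hc : 0 < c) (l : Filter ℝ) (L : ℝ)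
    (hL : Tendsto ψ l (𝓝 L)) :
    ∃ s ∈ l, ∀ u ∈ s, ∀ v ∈ s, |ψ u - ψ v| ≤ c := by
  have h2 : ∀ᶠ w in l, |ψ w - L| < c/2 := by
    have := Metric.tendsto_nhds.mp hL (c/2) (by linarith)
    simpa [Real.dist_eq] using this
  refine ⟨_, h2, fun u hu v hv => ?_⟩
  simp only [Set.mem_setOf_eq] at hu hv
  rw [abs_sub_le_iff]
  rw [abs_lt] at hu hv
  constructor <;> linarith

/-- For a regulated function on `[a,b]` and `c > 0`,
there is a partition of `[a,b]` with oscillation at most `c` on open subintervals. -/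
lemma my_chain_exists (a b c : ℝ) (hab : a < b) (hc : 0 < c) (ψ : ℝ → ℝ)
    (hreg : RegulatedOn a b ψ) : MyChain ψ c a b := by
  obtain ⟨hR, hL⟩ := hreg
  set S : Set ℝ := {y | (a < y ∧ y ≤ b) ∧ MyChain ψ c a y} with hSdef
  -- S is nonempty
  obtain ⟨L0, hL0⟩ := hR a le_rfl hab
  obtain ⟨s0, hs0, hosc0⟩ := my_osc_of_tendsto hc _ _ hL0
  obtain ⟨d0, hd0, hsub0⟩ := mem_nhdsGT_iff_exists_Ioo_subset.mp hs0
  set y0 : ℝ := min d0 b with hy0def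
  have hy0a : a < y0 := lt_min hd0 hab
  have hy0S : y0 ∈ S := by
    refine ⟨⟨hy0a, min_le_right _ _⟩, 1, fun i => if i = 0 then a else y0, by simp, by simp, ?_, ?_⟩
    · intro j hj
      interval_cases j
      simpa using hy0a
    · intro j hj
      interval_cases j
      simp only [if_pos rfl, if_neg one_ne_zero]
      intro p hp q hq
      exact hosc0 p (hsub0 ⟨hp.1, lt_of_lt_of_le hp.2 (min_le_left _ _)⟩)
        q (hsub0 ⟨hq.1, lt_of_lt_of_le hq.2 (min_le_left _ _)⟩)
  have hbdd : BddAbove S := ⟨b, fun y hy => hy.1.2⟩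
  have hne : S.Nonempty := ⟨y0, hy0S⟩
  set s : ℝ := sSup S with hsdef
  have has : a < s := lt_of_lt_of_le hy0a (le_csSup hbdd hy0S)
  have hsb : s ≤ b := csSup_le hne (fun y hy => hy.1.2)
  -- the sup itself admits a chain
  obtain ⟨L1, hL1⟩ := hL s has hsb
  obtain ⟨s1, hs1, hosc1⟩ := my_osc_of_tendsto hc _ _ hL1
  obtain ⟨d1, hd1, hsub1⟩ := mem_nhdsLT_iff_exists_Ioo_subset.mp hs1
  have hchain : MyChain ψ c a s := by
    have hw : max d1 a < s := max_lt hd1 has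
    obtain ⟨y, hyS, hwy⟩ := exists_lt_of_lt_csSup hne hw
    have hys : y ≤ s := le_csSup hbdd hyS
    rcases eq_or_lt_of_le hys with h | h
    · rw [← h]; exact hyS.2
    · refine my_extend hyS.2 h ?_
      intro p hp q hq
      refine hosc1 p (hsub1 ⟨?_, hp.2⟩) q (hsub1 ⟨?_, hq.2⟩)
      · exact lt_trans (lt_of_le_of_lt (le_max_left d1 a) hwy) hp.1
      · exact lt_trans (lt_of_le_of_lt (le_max_left d1 a) hwy) hq.1
  -- the sup equals b
  rcases eq_or_lt_of_le hsb with h | h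
  · rw [← h]; exact hchain
  · exfalso
    obtain ⟨L2, hL2⟩ := hR s has.le h
    obtain ⟨s2, hs2, hosc2⟩ := my_osc_of_tendsto hc _ _ hL2
    obtain ⟨d2, hd2, hsub2⟩ := mem_nhdsGT_iff_exists_Ioo_subset.mp hs2
    set y2 : ℝ := min d2 b with hy2def
    have hsy2 : s < y2 := lt_min hd2 h
    have hy2S : y2 ∈ S := by
      refine ⟨⟨lt_trans has hsy2, min_le_right _ _⟩, my_extend hchain hsy2 ?_⟩
      intro p hp q hq
      exact hosc2 p (hsub2 ⟨hp.1, lt_of_lt_of_le hp.2 (min_le_left _ _)⟩)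
        q (hsub2 ⟨hq.1, lt_of_lt_of_le hq.2 (min_le_left _ _)⟩)
    exact absurd (le_csSup hbdd hy2S) (not_le.mpr hsy2)

lemma my_tvc_lt_top (a b c : ℝ) (hab : a < b) (hc : 0 < c) (ψ : ℝ → ℝ)
    (hreg : RegulatedOn a b ψ) : TVc ψ c a b < ⊤ := by
  classical
  obtain ⟨N, z, hz0, hzN, hinc, hosc⟩ := my_chain_exists a b c hab hc ψ hreg
  have hN1 : 1 ≤ N := by
    rcases Nat.eq_zero_or_pos N with h | h
    · exfalso; rw [h, hz0] at hzN; exact absurd hzN hab.ne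
    · exact h
  set M1 : ℝ := (Finset.range (N+1)).sup' (by simp) (fun j => |ψ (z j)|) with hM1
  set M2 : ℝ := (Finset.range N).sup' (by simp; omega) (fun j => |ψ ((z j + z (j+1))/2)|) with hM2
  set M : ℝ := M1 + M2 + c with hM
  have hM1nn : 0 ≤ M1 := by
    rw [hM1]
    exact le_trans (abs_nonneg (ψ (z 0)))
      (Finset.le_sup' (fun j => |ψ (z j)|) (by simp : 0 ∈ Finset.range (N+1)))
  have hM2nn : 0 ≤ M2 := by
    rw [hM2]
    exact le_trans (abs_nonneg (ψ ((z 0 + z 1)/2)))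
      (Finset.le_sup' (fun j => |ψ ((z j + z (j+1))/2)|)
        (Finset.mem_range.mpr (by omega) : 0 ∈ Finset.range N))
  have hMnn : 0 ≤ M := by rw [hM]; linarith
  have hbound : ∀ w, a ≤ w → w ≤ b → |ψ w| ≤ M := by
    intro w hw1 hw2
    rcases my_locate (z := z) (N := N) (w := w) (by rw [hz0]; exact hw1) (by rw [hzN]; exact hw2)
      with ⟨j, hj, hw⟩ | ⟨j, hj, h1, h2⟩
    · rw [hw]
      have : |ψ (z j)| ≤ M1 := by
        rw [hM1]
        exact Finset.le_sup' (fun j => |ψ (z j)|) (Finset.mem_range.mpr (by omega))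
      rw [hM]; linarith
    · set mid := (z j + z (j+1))/2 with hmid
      have hjmem : mid ∈ Ioo (z j) (z (j+1)) := by
        constructor <;> · rw [hmid]; have := hinc j hj; linarith
      have h3 := hosc j hj w ⟨h1, h2⟩ mid hjmem
      have h4 : |ψ mid| ≤ M2 := by
        rw [hM2, hmid]
        exact Finset.le_sup' (fun j => |ψ ((z j + z (j+1))/2)|) (Finset.mem_range.mpr (by omega))
      have h5 := abs_sub_abs_le_abs_sub (ψ w) (ψ mid)
      rw [hM]; linarith
  have hfin : TVc ψ c a b ≤ ENNReal.ofReal ((2*(N+1) : ℝ) * (2*M)) := by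
    apply my_genVar_le
    intro n t htinc ht0 htn
    have htmono := my_mono htinc
    have htab : ∀ i, i ≤ n → a ≤ t i ∧ t i ≤ b := by
      intro i hi
      constructor
      · rcases Nat.eq_zero_or_pos i with h | h
        · rw [h]; exact ht0
        · exact le_trans ht0 (htmono 0 i h hi).le
      · rcases eq_or_lt_of_le hi with h | h
        · rw [h]; exact htn
        · exact le_trans (htmono i n h le_rfl).le htn
    set B := (Finset.range n).filter (fun i => c < |ψ (t (i+1)) - ψ (t i)|) with hB
    have hzj : ∀ i ∈ B, ∃ j, j ≤ N ∧ t i ≤ z j ∧ z j ≤ t (i+1) := by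
      intro i hi
      rw [hB, Finset.mem_filter, Finset.mem_range] at hi
      obtain ⟨hin, hci⟩ := hi
      have hti := htab i hin.le
      have hti1 := htab (i+1) hin
      rcases my_locate (z := z) (N := N) (w := t i) (by rw [hz0]; exact hti.1) (by rw [hzN]; exact hti.2)
        with ⟨j, hj, hw⟩ | ⟨j, hj, h1, h2⟩
      · exact ⟨j, hj, hw.le, by rw [← hw]; exact (htinc i hin).le⟩
      · refine ⟨j+1, by omega, h2.le, ?_⟩
        by_contra hcon
        push_neg at hcon
        have := hosc j hj (t (i+1)) ⟨lt_trans h1 (htinc i hin), hcon⟩ (t i) ⟨h1, h2⟩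
        linarith
    choose! f hf1 hf2 hf3 using hzj
    have hcard : B.card ≤ 2 * (N+1) := by
      have himg : B.image f ⊆ Finset.range (N+1) := by
        intro j hj
        rw [Finset.mem_image] at hj
        obtain ⟨i, hi, rfl⟩ := hj
        simp only [Finset.mem_range]
        have := hf1 i hi
        omega
      have h2card : ∀ jv ∈ B.image f, (B.filter (fun i => f i = jv)).card ≤ 2 := by
        intro jv _
        set T := B.filter (fun i => f i = jv) with hT
        rcases Finset.eq_empty_or_nonempty T with h | h
        · simp [h]
        · have hminmem := T.min'_mem h
          set i0 := T.min' h with hi0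
          have hsubT : T ⊆ {i0, i0+1} := by
            intro i hiT
            have hi0le : i0 ≤ i := Finset.min'_le T i hiT
            simp only [Finset.mem_insert, Finset.mem_singleton]
            by_contra hcon
            push_neg at hcon
            have hilt : i0 + 1 < i := by omega
            obtain ⟨hiB, hie⟩ := Finset.mem_filter.mp hiT
            obtain ⟨hi0B, hi0e⟩ := Finset.mem_filter.mp hminmem
            have hA := hf3 i0 hi0B
            have hBB := hf2 i hiB
            rw [hi0e] at hA
            rw [hie] at hBB
            have hiln : i < n := Finset.mem_range.mp (Finset.mem_filter.mp hiB).1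
            have := htmono (i0+1) i hilt hiln.le
            linarith
          calc T.card ≤ ({i0, i0+1} : Finset ℕ).card := Finset.card_le_card hsubT
            _ ≤ 2 := Finset.card_insert_le _ _ |>.trans (by simp)
      have h3 := Finset.card_le_mul_card_image B 2 h2card
      have h4 : (B.image f).card ≤ N + 1 := by
        simpa using Finset.card_le_card himg
      omega
    have hsum1 : ∑ i ∈ Finset.range n, max (|ψ (t (i+1)) - ψ (t i)| - c) 0
        = ∑ i ∈ B, max (|ψ (t (i+1)) - ψ (t i)| - c) 0 := by
      symm
      apply Finset.sum_subset (Finset.filter_subset _ _)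
      intro i hi hni
      rw [Finset.mem_filter] at hni
      push_neg at hni
      have := hni hi
      exact max_eq_right (by linarith)
    have hterm : ∀ i ∈ B, max (|ψ (t (i+1)) - ψ (t i)| - c) 0 ≤ 2*M := by
      intro i hiB
      have hin : i < n := Finset.mem_range.mp (Finset.mem_filter.mp hiB).1
      have h1 := hbound (t i) (htab i hin.le).1 (htab i hin.le).2
      have h2 := hbound (t (i+1)) (htab (i+1) hin).1 (htab (i+1) hin).2
      have h3 : |ψ (t (i+1)) - ψ (t i)| ≤ |ψ (t (i+1)) - 0| + |0 - ψ (t i)| :=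
        abs_sub_le _ 0 _
      simp only [sub_zero, zero_sub, abs_neg] at h3
      exact max_le (by linarith) (by linarith)
    have hsum2 : ∑ i ∈ B, max (|ψ (t (i+1)) - ψ (t i)| - c) 0 ≤ (B.card : ℝ) * (2*M) := by
      calc ∑ i ∈ B, max (|ψ (t (i+1)) - ψ (t i)| - c) 0 ≤ ∑ _i ∈ B, 2*M :=
            Finset.sum_le_sum hterm
        _ = (B.card : ℝ) * (2*M) := by rw [Finset.sum_const, nsmul_eq_mul]
    calc ∑ i ∈ Finset.range n, max (|ψ (t (i+1)) - ψ (t i)| - c) 0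
        ≤ (B.card : ℝ) * (2*M) := by rw [hsum1]; exact hsum2
      _ ≤ (2*(N+1) : ℝ) * (2*M) := by
          apply mul_le_mul_of_nonneg_right _ (by linarith)
          have : (B.card : ℝ) ≤ ((2*(N+1) : ℕ) : ℝ) := Nat.cast_le.mpr hcard
          push_cast at this ⊢
          linarith
  exact lt_of_le_of_lt hfin ENNReal.ofReal_lt_top

/-- `ψ` is regulated on `[a,b]` iff for every `c > 0`
the truncated variation `TV^c(ψ,[a,b])` is finite. -/
theorem stmt4 (a b : ℝ) (hab : a < b) (ψ : ℝ → ℝ) :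
    RegulatedOn a b ψ ↔ ∀ c : ℝ, 0 < c → TVc ψ c a b < ⊤ := by
  constructor
  · intro hreg c hc
    exact my_tvc_lt_top a b c hab hc ψ hreg
  · intro h
    constructor
    · intro x hax hxb
      haveI hnb : (𝓝[>] x).NeBot := nhdsGT_neBot x
      apply cauchy_map_iff_exists_tendsto.mp
      rw [Metric.cauchy_iff]
      refine ⟨Filter.map_neBot, ?_⟩
      intro ε hε
      by_contra hcon
      push_neg at hcon
      have H : ∀ s ∈ 𝓝[>] x, ∃ p ∈ s, ∃ q ∈ s, ε ≤ |ψ q - ψ p| := by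
        intro s hs
        obtain ⟨p', hp', q', hq', hd⟩ := hcon (ψ '' s) (image_mem_map hs)
        obtain ⟨p, hp, rfl⟩ := hp'
        obtain ⟨q, hq, rfl⟩ := hq'
        exact ⟨p, hp, q, hq, by rwa [Real.dist_eq, abs_sub_comm] at hd⟩
      obtain ⟨u, v, hb', hdesc⟩ := my_pairs_right ψ x b ε hxb hε H
      refine my_blowup ψ (ε/2) ε a b (by linarith) u v ?_ hdesc (h (ε/2) (by linarith))
      intro k
      obtain ⟨h1, h2, h3, h4⟩ := hb' k
      exact ⟨le_trans hax h1.le, h2, h3.le, h4⟩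
    · intro x hax hxb
      haveI hnb : (𝓝[<] x).NeBot := nhdsLT_neBot x
      apply cauchy_map_iff_exists_tendsto.mp
      rw [Metric.cauchy_iff]
      refine ⟨Filter.map_neBot, ?_⟩
      intro ε hε
      by_contra hcon
      push_neg at hcon
      have H : ∀ s ∈ 𝓝[<] x, ∃ p ∈ s, ∃ q ∈ s, ε ≤ |ψ q - ψ p| := by
        intro s hs
        obtain ⟨p', hp', q', hq', hd⟩ := hcon (ψ '' s) (image_mem_map hs)
        obtain ⟨p, hp, rfl⟩ := hp'
        obtain ⟨q, hq, rfl⟩ := hq'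
        exact ⟨p, hp, q, hq, by rwa [Real.dist_eq, abs_sub_comm] at hd⟩
      obtain ⟨u, v, hb', hasc⟩ := my_pairs_left ψ a x ε hax hε H
      refine my_blowup_asc ψ (ε/2) ε a b (by linarith) u v ?_ hasc (h (ε/2) (by linarith))
      intro k
      obtain ⟨h1, h2, h3, h4⟩ := hb' k
      exact ⟨h1.le, h2, le_trans h3.le hxb, h4⟩
end

section
/- Let t₀ ≥ 0 and let ψ, α, β : [t₀,∞) → ℝ be regulated functions with α(t) ≤ β(t) for all t ≥ t₀, and assume TV^{α,β}(ψ,[t₀,t]) < ∞ for every t ≥ t₀. Then there exists a function ψ^{α,β} : [t₀,∞) → ℝ of locally bounded variation such that for all t ≥ t₀: α(t) ≤ ψ(t) − ψ^{α,β}(t) ≤ β(t), TV(ψ^{α,β},[t₀,t]) = TV^{α,β}(ψ,[t₀,t]), UTV(ψ^{α,β},[t₀,t]) = UTV^{α,β}(ψ,[t₀,t]), DTV(ψ^{α,β},[t₀,t]) = DTV^{α,β}(ψ,[t₀,t]), and ψ^{α,β}(t) = ψ^{α,β}(t₀) + UTV^{α,β}(ψ,[t₀,t]) − DTV^{α,β}(ψ,[t₀,t]).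 -/
open Filter Set Topology
open scoped ENNReal

section S5proofs
open Finset
namespace S5X

def ok (n : ℕ) (t : ℕ → ℝ) : Prop := ∀ i, i < n → t i < t (i+1)

noncomputable def S (f : ℝ → ℝ → ℝ) (n : ℕ) (t : ℕ → ℝ) : ℝ :=
  ∑ i ∈ Finset.range n, f (t i) (t (i + 1))

theorem ok.mono {n t} (h : ok n t) : ∀ i j, i ≤ j → j ≤ n → t i ≤ t j := by
  intro i j hij hjn
  induction j with
  | zero => simp_all
  | succ k ih =>
    rcases Nat.eq_or_lt_of_le hij with rfl | hlt
    · exact le_rfl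
    · exact le_trans (ih (Nat.lt_succ_iff.mp hlt) (le_trans (Nat.le_succ _) hjn))
        (le_of_lt (h k (Nat.lt_of_succ_le hjn)))

theorem le_genVar {f : ℝ → ℝ → ℝ} {a b : ℝ} {n t} (h1 : ok n t) (h2 : a ≤ t 0)
    (h3 : t n ≤ b) : ENNReal.ofReal (S f n t) ≤ genVar f a b := by
  unfold genVar
  exact le_iSup_of_le n (le_iSup_of_le t (le_iSup_of_le ⟨h1, h2, h3⟩ le_rfl))

theorem genVar_le {f : ℝ → ℝ → ℝ} {a b : ℝ} {C : ℝ≥0∞}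
    (h : ∀ n t, ok n t → a ≤ t 0 → t n ≤ b → ENNReal.ofReal (S f n t) ≤ C) :
    genVar f a b ≤ C := by
  unfold genVar
  exact iSup_le fun n => iSup_le fun t => iSup_le fun hc => h n t hc.1 hc.2.1 hc.2.2

theorem genVar_congr {f g : ℝ → ℝ → ℝ} (h : ∀ s t : ℝ, f s t = g s t) (a b : ℝ) :
    genVar f a b = genVar g a b := by
  have : f = g := funext fun s => funext fun t => h s t
  rw [this]

theorem genVar_mono_f {f g : ℝ → ℝ → ℝ} {a b : ℝ}
    (h : ∀ s t : ℝ, a ≤ s → s ≤ t → t ≤ b → f s t ≤ g s t) :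
    genVar f a b ≤ genVar g a b := by
  refine genVar_le fun n t h1 h2 h3 => ?_
  refine le_trans (ENNReal.ofReal_le_ofReal ?_) (le_genVar h1 h2 h3)
  refine Finset.sum_le_sum fun i hi => ?_
  rw [Finset.mem_range] at hi
  exact h _ _ (le_trans h2 (h1.mono 0 i (Nat.zero_le _) hi.le))
    (le_of_lt (h1 i hi)) (le_trans (h1.mono (i+1) n hi (le_refl n)) h3)

theorem genVar_mono_b {f : ℝ → ℝ → ℝ} {a b b' : ℝ} (h : b ≤ b') :
    genVar f a b ≤ genVar f a b' :=
  genVar_le fun _ t h1 h2 h3 => le_genVar h1 h2 (le_trans h3 h)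

theorem genVar_self {f : ℝ → ℝ → ℝ} {a : ℝ} : genVar f a a = 0 := by
  refine le_antisymm (genVar_le fun n t h1 h2 h3 => ?_) (zero_le)
  match n with
  | 0 => simp [S]
  | (m+1) =>
    exact absurd (lt_of_lt_of_le (lt_of_le_of_lt h2 (h1 0 (Nat.succ_pos m)))
      (le_trans (h1.mono 1 (m+1) (Nat.one_le_iff_ne_zero.mpr (Nat.succ_ne_zero m)) le_rfl) h3))
      (lt_irrefl a)

theorem S_nonneg {f : ℝ → ℝ → ℝ} (hf : ∀ s t, 0 ≤ f s t) (n : ℕ) (t : ℕ → ℝ) :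
    0 ≤ S f n t := Finset.sum_nonneg fun i _ => hf _ _

theorem S_le_toReal {f : ℝ → ℝ → ℝ} {a b : ℝ} {n t}
    (h1 : ok n t) (h2 : a ≤ t 0) (h3 : t n ≤ b) (hfin : genVar f a b ≠ ⊤) :
    S f n t ≤ (genVar f a b).toReal := by
  have := le_genVar (f := f) h1 h2 h3
  exact (ENNReal.ofReal_le_iff_le_toReal hfin).mp this

theorem exists_near {f : ℝ → ℝ → ℝ} (hf : ∀ s t, 0 ≤ f s t) {a b : ℝ} (hab : a ≤ b)
    (hfin : genVar f a b ≠ ⊤) {ε : ℝ} (hε : 0 < ε) :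
    ∃ n t, ok n t ∧ a ≤ t 0 ∧ t n ≤ b ∧ (genVar f a b).toReal - ε ≤ S f n t := by
  by_cases h0 : genVar f a b = 0
  · exact ⟨0, fun _ => a, fun i hi => absurd hi (Nat.not_lt_zero i), le_rfl, hab,
      by simp [h0, S]; linarith⟩
  · have hlt : genVar f a b - ENNReal.ofReal ε < genVar f a b :=
      ENNReal.sub_lt_self hfin h0 (by simp [hε])
    unfold genVar at hlt
    rw [lt_iSup_iff] at hlt
    obtain ⟨n, hn⟩ := hlt
    rw [lt_iSup_iff] at hn
    obtain ⟨t, ht⟩ := hn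
    rw [lt_iSup_iff] at ht
    obtain ⟨⟨h1, h2, h3⟩, hv⟩ := ht
    refine ⟨n, t, h1, h2, h3, ?_⟩
    have h4 : genVar f a b ≤ ENNReal.ofReal (S f n t) + ENNReal.ofReal ε := by
      rw [← tsub_le_iff_right]
      exact le_of_lt hv
    have h5 : genVar f a b ≤ ENNReal.ofReal (S f n t + ε) := by
      rw [ENNReal.ofReal_add (S_nonneg hf n t) hε.le]
      exact h4
    have h6 := ENNReal.toReal_mono (by finiteness) h5
    rw [ENNReal.toReal_ofReal (by have := S_nonneg hf n t; linarith)] at h6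
    linarith

theorem concat {f : ℝ → ℝ → ℝ} (hf : ∀ s t, 0 ≤ f s t) {n m : ℕ} {t s : ℕ → ℝ}
    (ht : ok n t) (hs : ok m s) (hts : t n ≤ s 0) :
    ∃ N w, ok N w ∧ w 0 = t 0 ∧ w N = s m ∧ S f n t + S f m s ≤ S f N w := by
  rcases eq_or_lt_of_le hts with heq | hlt
  · refine ⟨n + m, fun i => if i ≤ n then t i else s (i - n), ?_, by simp, ?_, ?_⟩
    · intro i hi
      by_cases h1 : i + 1 ≤ n
      · simp only [le_of_lt (Nat.lt_of_succ_le h1), if_pos, h1]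
        exact ht i (Nat.lt_of_succ_le h1)
      · have hin : ¬ (i + 1 ≤ n) := h1
        by_cases h2 : i ≤ n
        · have : i = n := le_antisymm h2 (by omega)
          subst this
          simp only [if_pos le_rfl, if_neg hin, heq]
          have : i + 1 - i = 1 := by omega
          rw [this]
          exact hs 0 (by omega)
        · simp only [if_neg h2, if_neg hin]
          have : i + 1 - n = (i - n) + 1 := by omega
          rw [this]
          exact hs (i - n) (by omega)
    · beta_reduce
      by_cases h : n + m ≤ n
      · have hm : m = 0 := by omega
        subst hm
        simp only [Nat.add_zero, if_pos h, heq]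
        rw [if_pos (le_refl n)]
      · rw [if_neg h]
        congr 1
        omega
    · have hsum : S f (n + m) (fun i => if i ≤ n then t i else s (i - n))
          = S f n t + S f m s := by
        unfold S
        rw [Finset.sum_range_add]
        congr 1
        · refine Finset.sum_congr rfl fun i hi => ?_
          rw [Finset.mem_range] at hi
          simp only [if_pos hi.le, if_pos (Nat.succ_le_of_lt hi)]
        · refine Finset.sum_congr rfl fun i hi => ?_
          rw [Finset.mem_range] at hi
          beta_reduce
          have e1 : (if n + i ≤ n then t (n+i) else s (n + i - n)) = s i := by
            by_cases h0 : i = 0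
            · subst h0; simp [heq]
            · rw [if_neg (by omega)]; congr 1; omega
          have e2 : (if n + i + 1 ≤ n then t (n+i+1) else s (n + i + 1 - n)) = s (i+1) := by
            rw [if_neg (by omega)]; congr 1; omega
          rw [e1, e2]
      rw [hsum]
  · refine ⟨n + (1 + m), fun i => if i ≤ n then t i else s (i - (n+1)), ?_, by simp, ?_, ?_⟩
    · intro i hi
      by_cases h1 : i + 1 ≤ n
      · simp only [if_pos (le_of_lt (Nat.lt_of_succ_le h1)), if_pos h1]
        exact ht i (Nat.lt_of_succ_le h1)
      · by_cases h2 : i ≤ n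
        · have : i = n := by omega
          subst this
          simp only [if_pos le_rfl, if_neg h1]
          have : i + 1 - (i+1) = 0 := by omega
          rw [this]; exact hlt
        · simp only [if_neg h2, if_neg h1]
          have : i + 1 - (n+1) = (i - (n+1)) + 1 := by omega
          rw [this]
          exact hs (i - (n+1)) (by omega)
    · beta_reduce
      rw [if_neg (by omega)]; congr 1; omega
    · have hsum : S f (n + (1 + m)) (fun i => if i ≤ n then t i else s (i - (n+1)))
          = S f n t + (f (t n) (s 0) + S f m s) := by
        unfold S
        rw [Finset.sum_range_add]
        congr 1
        · refine Finset.sum_congr rfl fun i hi => ?_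
          rw [Finset.mem_range] at hi
          simp only [if_pos hi.le, if_pos (Nat.succ_le_of_lt hi)]
        · have hcong : ∀ x ∈ Finset.range (1 + m),
              f ((fun i => if i ≤ n then t i else s (i - (n+1))) (n + x))
                ((fun i => if i ≤ n then t i else s (i - (n+1))) (n + x + 1))
              = (if x = 0 then f (t n) (s 0) else f (s (x-1)) (s x)) := by
            intro x _
            beta_reduce
            by_cases hx : x = 0
            · subst hx
              rw [if_pos rfl, if_pos (by omega), if_neg (by omega)]
              congr 2 <;> omega
            · rw [if_neg hx, if_neg (by omega), if_neg (by omega)]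
              congr 2 <;> omega
          rw [Finset.sum_congr rfl hcong, show (1 + m) = m + 1 by omega,
            Finset.sum_range_succ']
          rw [add_comm]
          congr 1
      rw [hsum]
      have := hf (t n) (s 0)
      linarith

theorem onePt (f : ℝ → ℝ → ℝ) (x : ℝ) :
    ∃ N w, ok N w ∧ w 0 = x ∧ w N = x ∧ S f N w = 0 :=
  ⟨0, fun _ => x, fun i hi => absurd hi (Nat.not_lt_zero i), rfl, rfl, by simp [S]⟩

theorem twoPt (f : ℝ → ℝ → ℝ) {x y : ℝ} (hxy : x < y) :
    ∃ N w, ok N w ∧ w 0 = x ∧ w N = y ∧ S f N w = f x y := by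
  refine ⟨1, fun i => if i = 0 then x else y, ?_, by simp, by simp, by simp [S]⟩
  intro i hi
  have : i = 0 := by omega
  subst this; simpa using hxy

theorem fromTo (f : ℝ → ℝ → ℝ) {x y : ℝ} (hxy : x ≤ y) :
    ∃ N w, ok N w ∧ w 0 = x ∧ w N = y ∧
      S f N w = if x < y then f x y else 0 := by
  rcases eq_or_lt_of_le hxy with rfl | hlt
  · simpa using onePt f x
  · obtain ⟨N, w, h1, h2, h3, h4⟩ := twoPt f hlt
    exact ⟨N, w, h1, h2, h3, by rw [if_pos hlt]; exact h4⟩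

theorem S_split (f : ℝ → ℝ → ℝ) {k n : ℕ} (hk : k ≤ n) (t : ℕ → ℝ) :
    S f n t = S f k t + S f (n - k) (fun i => t (k + i)) := by
  unfold S
  conv_lhs => rw [show n = k + (n - k) by omega]
  rw [Finset.sum_range_add]
  congr 1

theorem ok_tail {k n : ℕ} {t : ℕ → ℝ} (h : ok n t) :
    ok (n - k) (fun i => t (k + i)) := by
  intro i hi
  have : k + (i + 1) = (k + i) + 1 := by omega
  simp only [this]
  exact h (k+i) (by omega)

theorem ok_prefix {k n : ℕ} {t : ℕ → ℝ} (hk : k ≤ n) (h : ok n t) : ok k t :=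
  fun i hi => h i (lt_of_lt_of_le hi hk)

theorem append1 {f : ℝ → ℝ → ℝ} {k : ℕ} {w : ℕ → ℝ} (hw : ok k w) {x : ℝ}
    (hx : w k < x) :
    ∃ w', ok (k+1) w' ∧ w' 0 = w 0 ∧ w' (k+1) = x ∧
      S f (k+1) w' = S f k w + f (w k) x := by
  refine ⟨fun i => if i ≤ k then w i else x, ?_, by simp, by simp, ?_⟩
  · intro i hi
    by_cases h1 : i + 1 ≤ k
    · simp only [if_pos (le_of_lt (Nat.lt_of_succ_le h1)), if_pos h1]
      exact hw i (Nat.lt_of_succ_le h1)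
    · have : i = k := by omega
      subst this
      simp only [if_pos le_rfl, if_neg h1]
      exact hx
  · unfold S
    rw [Finset.sum_range_succ]
    congr 1
    · refine Finset.sum_congr rfl fun i hi => ?_
      rw [Finset.mem_range] at hi
      simp only [if_pos hi.le, if_pos (Nat.succ_le_of_lt hi)]
    · simp only [if_pos le_rfl, if_neg (by omega : ¬ k + 1 ≤ k)]

noncomputable def fU (p q : ℝ → ℝ) (s t : ℝ) : ℝ := max (p t - p s - q s - q t) 0
noncomputable def fD (p q : ℝ → ℝ) (s t : ℝ) : ℝ := max (p s - p t - q s - q t) 0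
noncomputable def fT (p q : ℝ → ℝ) (s t : ℝ) : ℝ := max (|p t - p s| - q s - q t) 0

theorem fU_nonneg (p q : ℝ → ℝ) (s t : ℝ) : 0 ≤ fU p q s t := le_max_right _ _
theorem fD_nonneg (p q : ℝ → ℝ) (s t : ℝ) : 0 ≤ fD p q s t := le_max_right _ _
theorem fT_nonneg (p q : ℝ → ℝ) (s t : ℝ) : 0 ≤ fT p q s t := le_max_right _ _
theorem fU_ge (p q : ℝ → ℝ) (s t : ℝ) : p t - p s - q s - q t ≤ fU p q s t := le_max_left _ _
theorem fD_ge (p q : ℝ → ℝ) (s t : ℝ) : p s - p t - q s - q t ≤ fD p q s t := le_max_left _ _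
theorem fT_ge_fU (p q : ℝ → ℝ) (s t : ℝ) : fU p q s t ≤ fT p q s t :=
  max_le (le_trans (by have := le_abs_self (p t - p s); linarith) (le_max_left _ _))
    (le_max_right _ _)
theorem fT_ge_fD (p q : ℝ → ℝ) (s t : ℝ) : fD p q s t ≤ fT p q s t :=
  max_le (le_trans (by have := neg_abs_le (p t - p s); linarith) (le_max_left _ _))
    (le_max_right _ _)
theorem fT_eq (p q : ℝ → ℝ) {s t : ℝ} (h : 0 ≤ q s + q t) :
    fT p q s t = fU p q s t + fD p q s t := by
  unfold fT fU fD
  rcases le_total (p t - p s) 0 with h1 | h1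
  · have e : |p t - p s| - q s - q t = p s - p t - q s - q t := by
      rw [abs_of_nonpos h1]; ring
    rw [e, max_eq_right (by linarith : p t - p s - q s - q t ≤ 0), zero_add]
  · have e : |p t - p s| - q s - q t = p t - p s - q s - q t := by
      rw [abs_of_nonneg h1]
    rw [e, max_eq_right (by linarith : p s - p t - q s - q t ≤ 0), add_zero]
theorem fU_zero {p q : ℝ → ℝ} {s t : ℝ} (h : p t - p s - q s - q t ≤ 0) :
    fU p q s t = 0 := max_eq_right h
theorem fU_raw {p q : ℝ → ℝ} {s t : ℝ} (h : 0 ≤ p t - p s - q s - q t) :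
    fU p q s t = p t - p s - q s - q t := max_eq_left h
theorem fD_zero {p q : ℝ → ℝ} {s t : ℝ} (h : p s - p t - q s - q t ≤ 0) :
    fD p q s t = 0 := max_eq_right h
theorem fD_raw {p q : ℝ → ℝ} {s t : ℝ} (h : 0 ≤ p s - p t - q s - q t) :
    fD p q s t = p s - p t - q s - q t := max_eq_left h

theorem fU_self (p q : ℝ → ℝ) {x : ℝ} (h : 0 ≤ q x) : fU p q x x = 0 :=
  max_eq_right (by linarith)
theorem fD_self (p q : ℝ → ℝ) {x : ℝ} (h : 0 ≤ q x) : fD p q x x = 0 :=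
  max_eq_right (by linarith)
theorem fT_self (p q : ℝ → ℝ) {x : ℝ} (h : 0 ≤ q x) : fT p q x x = 0 :=
  max_eq_right (by simp; linarith)

/-- Key combinatorial lemma: an up-chain can be converted to a down-chain
with matching anchor bookkeeping. -/
theorem Cstar {p q : ℝ → ℝ} {t₀ : ℝ} (hq : ∀ x, t₀ ≤ x → 0 ≤ q x)
    {m : ℕ} {z : ℕ → ℝ} (hz : ok m z) (hz0 : t₀ ≤ z 0) :
    ∃ k w, ok k w ∧ z 0 ≤ w 0 ∧ w k ≤ z m ∧
      S (fU p q) m z + (p (z 0) - q (z 0)) ≤ S (fD p q) k w + (p (w k) - q (w k)) := by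
  induction m with
  | zero => exact ⟨0, z, ok_prefix (Nat.zero_le 0) hz, le_rfl, le_rfl, by simp [S]⟩
  | succ m ih =>
    obtain ⟨k, w, hw, hw0, hwk, hineq⟩ := ih (ok_prefix (Nat.le_succ m) hz)
    have hSU : S (fU p q) (m+1) z = S (fU p q) m z + fU p q (z m) (z (m+1)) := by
      unfold S; rw [Finset.sum_range_succ]
    by_cases hraw : p (z (m+1)) - p (z m) - q (z m) - q (z (m+1)) ≤ 0
    · refine ⟨k, w, hw, hw0, le_trans hwk (le_of_lt (hz m (Nat.lt_succ_self m))), ?_⟩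
      rw [hSU, fU_zero hraw]
      linarith
    · push_neg at hraw
      have hzm : z m < z (m+1) := hz m (Nat.lt_succ_self m)
      by_cases hcase : p (w k) - q (w k) ≤ p (z m) + q (z m)
      · -- append z (m+1)
        obtain ⟨w', hw', h0', hk', hS'⟩ :=
          append1 (f := fD p q) hw (lt_of_le_of_lt hwk hzm)
        refine ⟨k+1, w', hw', by rw [h0']; exact hw0, by rw [hk'], ?_⟩
        rw [hSU, fU_raw hraw.le, hS', hk']
        have := fD_nonneg p q (w k) (z (m+1))
        linarith
      · -- append z m then z (m+1)
        push_neg at hcase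
        have hwkzm : w k < z m := by
          rcases lt_or_eq_of_le hwk with h | h
          · exact h
          · exfalso
            have hq1 : 0 ≤ q (z m) :=
              hq _ (le_trans hz0 ((ok_prefix (Nat.le_succ m) hz).mono 0 m (Nat.zero_le m) le_rfl))
            rw [h] at hcase
            linarith
        obtain ⟨w', hw', h0', hk', hS'⟩ := append1 (f := fD p q) hw hwkzm
        obtain ⟨w'', hw'', h0'', hk'', hS''⟩ := append1 (f := fD p q) hw' (by rw [hk']; exact hzm)
        refine ⟨k+2, w'', hw'', by rw [h0'', h0']; exact hw0, by rw [show k+2 = k+1+1 from rfl, hk''], ?_⟩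
        rw [show k+2 = k+1+1 from rfl, hS'', hk'', hS', hk']
        have h1 := fD_ge p q (w k) (z m)
        have h2 := fD_nonneg p q (z m) (z (m+1))
        rw [hSU, fU_raw hraw.le]
        linarith

theorem fU_cross {p q : ℝ → ℝ} {a u b : ℝ} :
    fU p q a b ≤ fU p q a u + (max (p b - q b) (p u - q u) - (p u - q u)) := by
  have h1 := fU_ge p q a u
  have h2 := fU_nonneg p q a u
  have h3 : p b - q b ≤ max (p b - q b) (p u - q u) := le_max_left _ _
  have h4 : p u - q u ≤ max (p b - q b) (p u - q u) := le_max_right _ _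
  exact max_le (by linarith) (by linarith)

/-- The finite construction at the heart of the MASTER inequality. -/
theorem master_construct {p q : ℝ → ℝ} {t₀ u v : ℝ} (hq : ∀ x, t₀ ≤ x → 0 ≤ q x)
    (htu : t₀ ≤ u) (huv : u ≤ v)
    {n : ℕ} {x : ℕ → ℝ} (hx : ok n x) (hx0 : t₀ ≤ x 0) (hxn : x n ≤ v)
    {kk : ℕ} {y : ℕ → ℝ} (hy : ok kk y) (hy0 : t₀ ≤ y 0) (hyk : y kk ≤ u) :
    ∃ nq tq nz tz, ok nq tq ∧ t₀ ≤ tq 0 ∧ tq nq ≤ u ∧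
      ok nz tz ∧ t₀ ≤ tz 0 ∧ tz nz ≤ v ∧
      S (fU p q) n x + S (fD p q) kk y ≤
        S (fU p q) nq tq + S (fD p q) nz tz + (p v - p u + q u + q v) := by
  classical
  by_cases hc : ∃ j, j ≤ n ∧ u < x j
  · -- Case II
    obtain ⟨j₀, hj₀n, hj₀⟩ := hc
    have hex : ∃ j, u < x j := ⟨j₀, hj₀⟩
    obtain ⟨j, hju, hmin, hjn⟩ : ∃ j, u < x j ∧ (∀ i, i < j → x i ≤ u) ∧ j ≤ n :=
      ⟨Nat.find hex, Nat.find_spec hex, fun i hi => le_of_not_gt (Nat.find_min hex hi),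
        le_trans (Nat.find_min' hex hj₀) hj₀n⟩
    have htb : t₀ ≤ x j := le_trans hx0 (hx.mono 0 j (Nat.zero_le j) hjn)
    have hbv : x j ≤ v := le_trans (hx.mono j n hjn le_rfl) hxn
    have htail : ok (n - j) (fun i => x (j + i)) := ok_tail hx
    have htail0 : x (j + 0) = x j := by congr 1
    have htailend : x (j + (n - j)) = x n := by congr 1; omega
    set G := max (p (x j) - q (x j)) (p u - q u) with hGdef
    -- chain for Cstar together with its anchor bound
    have hCs : ∃ k w, ok k w ∧ u ≤ w 0 ∧ w k ≤ x n ∧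
        S (fU p q) (n - j) (fun i => x (j + i)) + G ≤
          S (fD p q) k w + (p (w k) - q (w k)) := by
      rcases le_total (p (x j) - q (x j)) (p u - q u) with hG | hG
      · -- prepend u
        obtain ⟨N, C, hC, hC0, hCN, hCS⟩ :=
          concat (f := fU p q) (fU_nonneg p q) (n := 0) (t := fun _ => u)
            (fun i hi => absurd hi (Nat.not_lt_zero i)) htail
            (by show u ≤ x (j + 0); rw [htail0]; exact hju.le)
        obtain ⟨k, w, hw, hw0, hwk, hineq⟩ := Cstar (p := p) hq hC (by rw [hC0]; exact htu)
        rw [hC0] at hw0 hineq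
        rw [hCN, htailend] at hwk
        refine ⟨k, w, hw, hw0, hwk, ?_⟩
        rw [hGdef, max_eq_right hG]
        have h0 : S (fU p q) 0 (fun _ => u) = 0 := by simp [S]
        rw [h0] at hCS
        linarith
      · obtain ⟨k, w, hw, hw0, hwk, hineq⟩ :=
          Cstar (p := p) hq htail (by show t₀ ≤ x (j + 0); rw [htail0]; exact htb)
        rw [htail0] at hw0 hineq
        rw [htailend] at hwk
        refine ⟨k, w, hw, le_trans hju.le hw0, hwk, ?_⟩
        rw [hGdef, max_eq_left hG]
        exact hineq
    obtain ⟨k, w, hw, hw0, hwk, hCineq⟩ := hCs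
    -- Q chain and key bound
    have hQ : ∃ nq tq, ok nq tq ∧ t₀ ≤ tq 0 ∧ tq nq ≤ u ∧
        S (fU p q) n x ≤ S (fU p q) nq tq + (G - (p u - q u)) +
          S (fU p q) (n - j) (fun i => x (j + i)) := by
      rcases Nat.eq_zero_or_pos j with hj0 | hjpos
      · subst hj0
        obtain ⟨N, C, hC, hC0, hCN, hCS⟩ := onePt (fU p q) u
        refine ⟨N, C, hC, by rw [hC0]; exact htu, le_of_eq hCN, ?_⟩
        rw [hCS]
        have he : S (fU p q) (n - 0) (fun i => x (0 + i)) = S (fU p q) n x := by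
          unfold S
          rw [Nat.sub_zero]
          exact Finset.sum_congr rfl fun i _ => by beta_reduce; congr 2 <;> omega
        rw [he]
        have hG0 : p u - q u ≤ G := le_max_right _ _
        linarith
      · obtain ⟨jj, hjj⟩ := Nat.exists_eq_add_of_lt hjpos
        rw [zero_add] at hjj
        have hjju : x jj ≤ u := hmin jj (by omega)
        obtain ⟨Nf, Cf, hCf, hCf0, hCfN, hCfS⟩ := fromTo (fU p q) hjju
        obtain ⟨N, C, hC, hC0, hCN, hCS⟩ :=
          concat (f := fU p q) (fU_nonneg p q) (ok_prefix (by omega : jj ≤ n) hx) hCf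
            (by rw [hCf0])
        refine ⟨N, C, hC, by rw [hC0]; exact hx0, le_of_eq (hCN.trans hCfN), ?_⟩
        have hsplit : S (fU p q) n x = S (fU p q) j x +
            S (fU p q) (n - j) (fun i => x (j + i)) := S_split _ hjn x
        have hsucc : S (fU p q) j x = S (fU p q) jj x + fU p q (x jj) (x j) := by
          rw [hjj]
          unfold S
          rw [Finset.sum_range_succ]
        have hfromto : fU p q (x jj) u ≤ S (fU p q) Nf Cf := by
          rw [hCfS]
          rcases lt_or_eq_of_le hjju with h | h
          · rw [if_pos h]
          · rw [if_neg (by rw [h]; exact lt_irrefl u), ← h]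
            have h2 : fU p q (x jj) (x jj) = 0 := max_eq_right (by
              have := hq (x jj) (le_trans hx0 (hx.mono 0 jj (Nat.zero_le jj) (by omega)))
              linarith)
            rw [h2]
        have hcross := fU_cross (p := p) (q := q) (a := x jj) (u := u) (b := x j)
        rw [← hGdef] at hcross
        rw [hsplit, hsucc]
        linarith
    obtain ⟨nq, tq, hQ1, hQ2, hQ3, hQineq⟩ := hQ
    -- Z chain
    have hwkt : t₀ ≤ w k := le_trans (le_trans htu hw0) (hw.mono 0 k (Nat.zero_le k) le_rfl)
    obtain ⟨Nf, Cf, hCf, hCf0, hCfN, hCfS⟩ := fromTo (fD p q) (le_trans hwk hxn)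
    have hfromto : p (w k) - p v - q (w k) - q v ≤ S (fD p q) Nf Cf := by
      rw [hCfS]
      rcases lt_or_eq_of_le (le_trans hwk hxn) with h | h
      · rw [if_pos h]; exact fD_ge p q _ _
      · rw [if_neg (by rw [h]; exact lt_irrefl v), ← h]
        have := hq (w k) hwkt
        linarith
    obtain ⟨N1, C1, hC1, hC10, hC1N, hC1S⟩ :=
      concat (f := fD p q) (fD_nonneg p q) hw hCf (by rw [hCf0])
    obtain ⟨N2, C2, hC2, hC20, hC2N, hC2S⟩ :=
      concat (f := fD p q) (fD_nonneg p q) hy hC1 (by rw [hC10]; exact le_trans hyk hw0)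
    refine ⟨nq, tq, N2, C2, hQ1, hQ2, hQ3, hC2, by rw [hC20]; exact hy0,
      le_of_eq ((hC2N.trans hC1N).trans hCfN), ?_⟩
    linarith
  · -- Case I : all points ≤ u
    push_neg at hc
    have hxnu : x n ≤ u := hc n le_rfl
    obtain ⟨Nf, Cf, hCf, hCf0, hCfN, hCfS⟩ := fromTo (fD p q) huv
    have hfromto : p u - p v - q u - q v ≤ S (fD p q) Nf Cf := by
      rw [hCfS]
      rcases lt_or_eq_of_le huv with h | h
      · rw [if_pos h]; exact fD_ge p q _ _
      · rw [if_neg (by rw [h]; exact lt_irrefl v), ← h]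
        have := hq u htu
        linarith
    obtain ⟨N, C, hC, hC0, hCN, hCS⟩ :=
      concat (f := fD p q) (fD_nonneg p q) hy hCf (by rw [hCf0]; exact hyk)
    refine ⟨n, x, N, C, hx, hx0, hxnu, hC, by rw [hC0]; exact hy0,
      le_of_eq (hCN.trans hCfN), ?_⟩
    linarith

theorem master {p q : ℝ → ℝ} {t₀ u v : ℝ} (hq : ∀ x, t₀ ≤ x → 0 ≤ q x)
    (htu : t₀ ≤ u) (huv : u ≤ v)
    (hfU : genVar (fU p q) t₀ v ≠ ⊤) (hfD : genVar (fD p q) t₀ v ≠ ⊤) :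
    (genVar (fU p q) t₀ v).toReal + (genVar (fD p q) t₀ u).toReal ≤
      (genVar (fU p q) t₀ u).toReal + (genVar (fD p q) t₀ v).toReal +
        (p v - p u + q u + q v) := by
  have htv : t₀ ≤ v := le_trans htu huv
  have hfDu : genVar (fD p q) t₀ u ≠ ⊤ :=
    (lt_of_le_of_lt (genVar_mono_b huv) hfD.lt_top).ne
  have hfUu : genVar (fU p q) t₀ u ≠ ⊤ :=
    (lt_of_le_of_lt (genVar_mono_b huv) hfU.lt_top).ne
  have key : ∀ ε : ℝ, 0 < ε →
      (genVar (fU p q) t₀ v).toReal + (genVar (fD p q) t₀ u).toReal ≤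
      ((genVar (fU p q) t₀ u).toReal + (genVar (fD p q) t₀ v).toReal +
        (p v - p u + q u + q v)) + ε := by
    intro ε hε
    obtain ⟨n, x, hx, hx0, hxn, hX⟩ :=
      exists_near (fU_nonneg p q) htv hfU (half_pos hε)
    obtain ⟨kk, y, hy, hy0, hyk, hY⟩ :=
      exists_near (fD_nonneg p q) htu hfDu (half_pos hε)
    obtain ⟨nq, tq, nz, tz, h1, h2, h3, h4, h5, h6, hineq⟩ :=
      master_construct hq htu huv hx hx0 hxn hy hy0 hyk
    have hQ := S_le_toReal h1 h2 h3 hfUu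
    have hZ := S_le_toReal h4 h5 h6 hfD
    linarith
  exact le_of_forall_pos_le_add key

-- pair lists
def pOK (t₀ : ℝ) (l : List (ℝ × ℝ)) : Prop := ∀ e ∈ l, t₀ ≤ e.1 ∧ e.1 ≤ e.2
def R (e f : ℝ × ℝ) : Prop := f.2 ≤ e.1
def upOK (p q : ℝ → ℝ) (l : List (ℝ × ℝ)) : Prop :=
  ∀ e ∈ l, 0 ≤ p e.2 - p e.1 - q e.1 - q e.2
def below (l : List (ℝ × ℝ)) (z : ℝ) : Prop := ∀ e ∈ l, e.2 ≤ z
noncomputable def sumUL (p q : ℝ → ℝ) (l : List (ℝ × ℝ)) : ℝ :=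
  (l.map (fun e => p e.2 - p e.1 - q e.1 - q e.2)).sum
noncomputable def sumDL (p q : ℝ → ℝ) (l : List (ℝ × ℝ)) : ℝ :=
  (l.map (fun e => fD p q e.1 e.2)).sum

theorem chain'_below {l : List (ℝ×ℝ)} {e : ℝ×ℝ}
    (h : (e :: l).Chain' R) (hmem : ∀ f ∈ l, f.1 ≤ f.2) :
    below l e.1 := by
  induction l generalizing e with
  | nil => intro f hf; simp at hf
  | cons g l ih =>
    intro f hf
    have h1 : R e g := (List.isChain_cons_cons.mp h).1
    rcases List.mem_cons.mp hf with rfl | hf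
    · exact h1
    · have h2 := ih (e := g) (List.isChain_cons_cons.mp h).2 (fun f hf => hmem f (List.mem_cons_of_mem g hf))
      exact le_trans (h2 f hf) (le_trans (hmem g (List.mem_cons_self)) h1)

theorem chain'_cons_of_below {l : List (ℝ×ℝ)} {e : ℝ×ℝ}
    (h : l.Chain' R) (hb : below l e.1) : (e :: l).Chain' R := by
  refine List.isChain_cons.mpr ⟨fun y hy => ?_, h⟩
  exact hb y (List.mem_of_mem_head? hy)

-- conversion of chains to pair lists
noncomputable def ulOf (p q : ℝ → ℝ) (x : ℕ → ℝ) : ℕ → List (ℝ × ℝ)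
  | 0 => []
  | n+1 => (if 0 ≤ p (x (n+1)) - p (x n) - q (x n) - q (x (n+1))
      then [(x n, x (n+1))] else []) ++ ulOf p q x n

noncomputable def dlOf (x : ℕ → ℝ) : ℕ → List (ℝ × ℝ)
  | 0 => []
  | n+1 => (x n, x (n+1)) :: dlOf x n

theorem ulOf_spec (p q : ℝ → ℝ) {t₀ : ℝ} {n : ℕ} {x : ℕ → ℝ} (hx : ok n x)
    (hx0 : t₀ ≤ x 0) :
    pOK t₀ (ulOf p q x n) ∧ upOK p q (ulOf p q x n) ∧ (ulOf p q x n).Chain' R ∧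
      below (ulOf p q x n) (x n) ∧ sumUL p q (ulOf p q x n) = S (fU p q) n x := by
  induction n with
  | zero =>
    refine ⟨fun e he => by simp [ulOf] at he, fun e he => by simp [ulOf] at he,
      by simp [ulOf]; exact List.isChain_nil, fun e he => by simp [ulOf] at he, by simp [ulOf, sumUL, S]⟩
  | succ n ih =>
    obtain ⟨ih1, ih2, ih3, ih4, ih5⟩ := ih (fun i hi => hx i (by omega))
    have hxn : x n ≤ x (n+1) := (hx n (by omega)).le
    have hSucc : S (fU p q) (n+1) x = S (fU p q) n x + fU p q (x n) (x (n+1)) := by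
      unfold S; rw [Finset.sum_range_succ]
    by_cases hr : 0 ≤ p (x (n+1)) - p (x n) - q (x n) - q (x (n+1))
    · have heq : ulOf p q x (n+1) = (x n, x (n+1)) :: ulOf p q x n := by
        show (if 0 ≤ p (x (n+1)) - p (x n) - q (x n) - q (x (n+1))
          then [(x n, x (n+1))] else []) ++ ulOf p q x n = _
        rw [if_pos hr, List.singleton_append]
      rw [heq]
      refine ⟨?_, ?_, ?_, ?_, ?_⟩
      · intro e he
        rcases List.mem_cons.mp he with rfl | he
        · exact ⟨le_trans hx0 (hx.mono 0 n (Nat.zero_le n) (by omega)), hxn⟩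
        · exact ih1 e he
      · intro e he
        rcases List.mem_cons.mp he with rfl | he
        · exact hr
        · exact ih2 e he
      · exact chain'_cons_of_below ih3 ih4
      · intro e he
        rcases List.mem_cons.mp he with rfl | he
        · exact le_rfl
        · exact le_trans (ih4 e he) hxn
      · show (p (x (n+1)) - p (x n) - q (x n) - q (x (n+1))) + sumUL p q (ulOf p q x n)
          = S (fU p q) (n+1) x
        rw [ih5, hSucc, fU_raw hr]
        ring
    · have heq : ulOf p q x (n+1) = ulOf p q x n := by
        show (if 0 ≤ p (x (n+1)) - p (x n) - q (x n) - q (x (n+1))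
          then [(x n, x (n+1))] else []) ++ ulOf p q x n = _
        rw [if_neg hr, List.nil_append]
      rw [heq]
      refine ⟨ih1, ih2, ih3, fun e he => le_trans (ih4 e he) hxn, ?_⟩
      rw [ih5, hSucc, fU_zero (le_of_not_ge hr), add_zero]
  termination_by n

theorem dlOf_spec {t₀ : ℝ} {n : ℕ} {x : ℕ → ℝ} (hx : ok n x)
    (hx0 : t₀ ≤ x 0) (p q : ℝ → ℝ) :
    pOK t₀ (dlOf x n) ∧ (dlOf x n).Chain' R ∧
      below (dlOf x n) (x n) ∧ sumDL p q (dlOf x n) = S (fD p q) n x := by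
  induction n with
  | zero =>
    exact ⟨fun e he => by simp [dlOf] at he, by simp [dlOf]; exact List.isChain_nil,
      fun e he => by simp [dlOf] at he, by simp [dlOf, sumDL, S]⟩
  | succ n ih =>
    obtain ⟨ih1, ih2, ih3, ih4⟩ := ih (fun i hi => hx i (by omega))
    have hxn : x n ≤ x (n+1) := (hx n (by omega)).le
    rw [show dlOf x (n+1) = (x n, x (n+1)) :: dlOf x n from rfl]
    refine ⟨?_, chain'_cons_of_below ih2 ih3, ?_, ?_⟩
    · intro e he
      rcases List.mem_cons.mp he with rfl | he
      · exact ⟨le_trans hx0 (hx.mono 0 n (Nat.zero_le n) (by omega)), hxn⟩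
      · exact ih1 e he
    · intro e he
      rcases List.mem_cons.mp he with rfl | he
      · exact le_rfl
      · exact le_trans (ih3 e he) hxn
    · show fD p q (x n) (x (n+1)) + sumDL p q (dlOf x n) = S (fD p q) (n+1) x
      rw [ih4]
      unfold S
      rw [Finset.sum_range_succ]
      ring

theorem sumUL_cons (p q : ℝ → ℝ) (e : ℝ × ℝ) (l : List (ℝ × ℝ)) :
    sumUL p q (e :: l) = (p e.2 - p e.1 - q e.1 - q e.2) + sumUL p q l := by
  simp [sumUL]
theorem sumDL_cons (p q : ℝ → ℝ) (e : ℝ × ℝ) (l : List (ℝ × ℝ)) :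
    sumDL p q (e :: l) = fD p q e.1 e.2 + sumDL p q l := by
  simp [sumDL]
theorem sumUL_nil (p q : ℝ → ℝ) : sumUL p q [] = 0 := rfl
theorem sumDL_nil (p q : ℝ → ℝ) : sumDL p q [] = 0 := rfl

theorem emit {p q : ℝ → ℝ} {a b : ℝ} (hab : a ≤ b) {k₀ : ℕ} {w₀ : ℕ → ℝ}
    (hw : ok k₀ w₀) (hbw : b ≤ w₀ 0) :
    ∃ k' w', ok k' w' ∧ w' 0 = a ∧ w' k' = w₀ k₀ ∧
      (if a < b then fT p q a b else 0) + S (fT p q) k₀ w₀ ≤ S (fT p q) k' w' := by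
  obtain ⟨Nf, Cf, h1, h2, h3, h4⟩ := fromTo (fT p q) hab
  obtain ⟨M, z, h5, h6, h7, h8⟩ := concat (fT_nonneg p q) h1 hw (by rw [h3]; exact hbw)
  exact ⟨M, z, h5, by rw [h6, h2], h7, by rw [← h4]; exact h8⟩

theorem ite_nonneg (p q : ℝ → ℝ) (a b : ℝ) : 0 ≤ (if a < b then fT p q a b else 0) := by
  split
  · exact fT_nonneg p q a b
  · exact le_rfl

theorem ite_ge_rawU {p q : ℝ → ℝ} {a b : ℝ} (hab : a ≤ b) (hqa : 0 ≤ q a) :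
    p b - p a - q a - q b ≤ (if a < b then fT p q a b else 0) := by
  rcases lt_or_eq_of_le hab with h | h
  · rw [if_pos h]
    exact le_trans (fU_ge p q a b) (fT_ge_fU p q a b)
  · subst h
    rw [if_neg (lt_irrefl a)]
    linarith

theorem ite_ge_rawD {p q : ℝ → ℝ} {a b : ℝ} (hab : a ≤ b) (hqa : 0 ≤ q a) :
    p a - p b - q a - q b ≤ (if a < b then fT p q a b else 0) := by
  rcases lt_or_eq_of_le hab with h | h
  · rw [if_pos h]
    exact le_trans (fD_ge p q a b) (fT_ge_fD p q a b)
  · subst h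
    rw [if_neg (lt_irrefl a)]
    linarith

/-- Core merge recursion. -/
theorem MC {p q : ℝ → ℝ} {t₀ : ℝ} (hq : ∀ x, t₀ ≤ x → 0 ≤ q x) :
    ∀ (N : ℕ) (dl ul : List (ℝ × ℝ)) (k₀ : ℕ) (w₀ : ℕ → ℝ),
      dl.length + ul.length ≤ N →
      pOK t₀ ul → upOK p q ul → ul.Chain' R →
      pOK t₀ dl → dl.Chain' R →
      ok k₀ w₀ → t₀ ≤ w₀ 0 →
      below ul (w₀ 0) → below dl (w₀ 0) →
      ∃ M z, ok M z ∧ t₀ ≤ z 0 ∧ z M = w₀ k₀ ∧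
        sumUL p q ul + sumDL p q dl + S (fT p q) k₀ w₀ ≤ S (fT p q) M z := by
  intro N
  induction N with
  | zero =>
    intro dl ul k₀ w₀ hlen _ _ _ _ _ hw hw0 _ _
    have hd : dl = [] := List.eq_nil_of_length_eq_zero (by omega)
    have hu : ul = [] := List.eq_nil_of_length_eq_zero (by omega)
    subst hd; subst hu
    exact ⟨k₀, w₀, hw, hw0, rfl, by rw [sumUL_nil, sumDL_nil]; linarith⟩
  | succ N ih =>
    intro dl ul k₀ w₀ hlen hul1 hul2 hul3 hdl1 hdl2 hw hw0 hbu hbd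
    cases dl with
    | nil =>
      cases ul with
      | nil => exact ⟨k₀, w₀, hw, hw0, rfl, by rw [sumUL_nil, sumDL_nil]; linarith⟩
      | cons e ulr =>
        obtain ⟨A, B⟩ := e
        have hmem := hul1 (A, B) (List.mem_cons_self)
        have htA : t₀ ≤ A := hmem.1
        have hABle : A ≤ B := hmem.2
        have hrawU : 0 ≤ p B - p A - q A - q B := hul2 (A, B) (List.mem_cons_self)
        have hBw : B ≤ w₀ 0 := hbu (A, B) (List.mem_cons_self)
        obtain ⟨k', w', hw', hs0, hse, hSe⟩ := emit (p := p) (q := q) hABle hw hBw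
        have hulr_below : below ulr A :=
          chain'_below hul3 (fun f hf => (hul1 f (List.mem_cons_of_mem _ hf)).2)
        obtain ⟨M, z, hz1, hz2, hz3, hz4⟩ := ih [] ulr k' w'
          (by simp only [List.length_cons, List.length_nil] at hlen ⊢; omega)
          (fun f hf => hul1 f (List.mem_cons_of_mem _ hf))
          (fun f hf => hul2 f (List.mem_cons_of_mem _ hf))
          (List.isChain_cons.mp hul3).2
          (fun f hf => by simp at hf) List.isChain_nil
          hw' (by rw [hs0]; exact htA)
          (by rw [hs0]; exact hulr_below)
          (fun f hf => by simp at hf)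
        refine ⟨M, z, hz1, hz2, by rw [hz3, hse], ?_⟩
        rw [sumUL_cons, sumDL_nil] at *
        have hite := ite_ge_rawU (p := p) (q := q) hABle (hq A htA)
        linarith
    | cons e rest =>
      obtain ⟨c, d⟩ := e
      have hmem := hdl1 (c, d) (List.mem_cons_self)
      have htc : t₀ ≤ c := hmem.1
      have hcd : c ≤ d := hmem.2
      have hdw : d ≤ w₀ 0 := hbd (c, d) (List.mem_cons_self)
      have hrest1 : pOK t₀ rest := fun f hf => hdl1 f (List.mem_cons_of_mem _ hf)
      have hrest2 : rest.Chain' R := (List.isChain_cons.mp hdl2).2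
      have hrest_below : below rest c :=
        chain'_below hdl2 (fun f hf => (hdl1 f (List.mem_cons_of_mem _ hf)).2)
      have hrest_belowW : below rest (w₀ 0) := fun f hf => hbd f (List.mem_cons_of_mem _ hf)
      by_cases hraw : p c - p d - q c - q d ≤ 0
      · -- inactive down pair: drop it
        obtain ⟨M, z, hz1, hz2, hz3, hz4⟩ := ih rest ul k₀ w₀
          (by simp only [List.length_cons] at hlen; omega)
          hul1 hul2 hul3 hrest1 hrest2 hw hw0 hbu hrest_belowW
        refine ⟨M, z, hz1, hz2, hz3, ?_⟩
        rw [sumDL_cons]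
        have : fD p q c d = 0 := max_eq_right hraw
        rw [this]
        linarith
      · push_neg at hraw
        have hfDcd : fD p q c d = p c - p d - q c - q d := fD_raw hraw.le
        have hcd' : c < d := by
          rcases lt_or_eq_of_le hcd with h | h
          · exact h
          · exfalso; have := hq c htc; rw [← h] at hraw; linarith
        cases ul with
        | nil =>
          obtain ⟨k', w', hw', hs0, hse, hSe⟩ := emit (p := p) (q := q) hcd hw hdw
          rw [if_pos hcd'] at hSe
          obtain ⟨M, z, hz1, hz2, hz3, hz4⟩ := ih rest [] k' w'
            (by simp only [List.length_cons, List.length_nil] at hlen ⊢; omega)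
            (fun f hf => by simp at hf) (fun f hf => by simp at hf) List.isChain_nil
            hrest1 hrest2 hw' (by rw [hs0]; exact htc)
            (fun f hf => by simp at hf) (by rw [hs0]; exact hrest_below)
          refine ⟨M, z, hz1, hz2, by rw [hz3, hse], ?_⟩
          rw [sumDL_cons, sumUL_nil] at *
          have := fT_ge_fD p q c d
          linarith
        | cons e ulr =>
          obtain ⟨A, B⟩ := e
          have hmemU := hul1 (A, B) (List.mem_cons_self)
          have htA : t₀ ≤ A := hmemU.1
          have hABle : A ≤ B := hmemU.2
          have hrawU : 0 ≤ p B - p A - q A - q B := hul2 (A, B) (List.mem_cons_self)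
          have hBw : B ≤ w₀ 0 := hbu (A, B) (List.mem_cons_self)
          have hulr1 : pOK t₀ ulr := fun f hf => hul1 f (List.mem_cons_of_mem _ hf)
          have hulr2 : upOK p q ulr := fun f hf => hul2 f (List.mem_cons_of_mem _ hf)
          have hulr3 : ulr.Chain' R := (List.isChain_cons.mp hul3).2
          have hulr_below : below ulr A :=
            chain'_below hul3 (fun f hf => (hul1 f (List.mem_cons_of_mem _ hf)).2)
          have htB : t₀ ≤ B := le_trans htA hABle
          by_cases h1 : d ≤ A
          · -- fold the up pair
            obtain ⟨k', w', hw', hs0, hse, hSe⟩ := emit (p := p) (q := q) hABle hw hBw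
            obtain ⟨M, z, hz1, hz2, hz3, hz4⟩ := ih ((c,d) :: rest) ulr k' w'
              (by simp only [List.length_cons] at hlen ⊢; omega)
              hulr1 hulr2 hulr3 hdl1 hdl2 hw' (by rw [hs0]; exact htA)
              (by rw [hs0]; exact hulr_below)
              (by rw [hs0]; intro f hf
                  rcases List.mem_cons.mp hf with rfl | hf
                  · exact h1
                  · exact le_trans (hrest_below f hf) (le_trans hcd h1))
            refine ⟨M, z, hz1, hz2, by rw [hz3, hse], ?_⟩
            rw [sumUL_cons] at *
            have hite := ite_ge_rawU (p := p) (q := q) hABle (hq A htA)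
            linarith
          · push_neg at h1
            by_cases h2 : B ≤ c
            · -- emit the down pair
              obtain ⟨k', w', hw', hs0, hse, hSe⟩ := emit (p := p) (q := q) hcd hw hdw
              rw [if_pos hcd'] at hSe
              obtain ⟨M, z, hz1, hz2, hz3, hz4⟩ := ih rest ((A,B) :: ulr) k' w'
                (by simp only [List.length_cons] at hlen ⊢; omega)
                hul1 hul2 hul3 hrest1 hrest2 hw' (by rw [hs0]; exact htc)
                (by rw [hs0]; intro f hf
                    rcases List.mem_cons.mp hf with rfl | hf
                    · exact h2
                    · exact le_trans (hulr_below f hf) (le_trans hABle h2))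
                (by rw [hs0]; exact hrest_below)
              refine ⟨M, z, hz1, hz2, by rw [hz3, hse], ?_⟩
              rw [sumDL_cons] at *
              have := fT_ge_fD p q c d
              linarith
            · push_neg at h2
              by_cases h3 : A < c
              · by_cases h4 : d ≤ B
                · -- 3a : both inside
                  obtain ⟨k1, w1, hw1, hs01, hse1, hSe1⟩ := emit (p := p) (q := q) h4 hw hBw
                  obtain ⟨k2, w2, hw2, hs02, hse2, hSe2⟩ :=
                    emit (p := p) (q := q) hcd hw1 (by rw [hs01])
                  rw [if_pos hcd'] at hSe2
                  have hDB : p B - p A - q A - q B - (p c - p A - q A - q c)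
                      + (p c - p d - q c - q d) ≤ (if d < B then fT p q d B else 0) := by
                    rcases lt_or_eq_of_le h4 with h | h
                    · rw [if_pos h]
                      have := le_trans (fU_ge p q d B) (fT_ge_fU p q d B)
                      linarith
                    · subst h
                      rw [if_neg (lt_irrefl d)]
                      have := hq d htB
                      linarith
                  have hfT := fT_ge_fD p q c d
                  by_cases hkeep : 0 ≤ p c - p A - q A - q c
                  · obtain ⟨M, z, hz1, hz2, hz3, hz4⟩ := ih rest ((A,c) :: ulr) k2 w2
                      (by simp only [List.length_cons] at hlen ⊢; omega)
                      (by intro f hf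
                          rcases List.mem_cons.mp hf with rfl | hf
                          · exact ⟨htA, h3.le⟩
                          · exact hulr1 f hf)
                      (by intro f hf
                          rcases List.mem_cons.mp hf with rfl | hf
                          · exact hkeep
                          · exact hulr2 f hf)
                      (chain'_cons_of_below hulr3 hulr_below)
                      hrest1 hrest2 hw2 (by rw [hs02]; exact htc)
                      (by rw [hs02]; intro f hf
                          rcases List.mem_cons.mp hf with rfl | hf
                          · exact le_rfl
                          · exact le_trans (hulr_below f hf) h3.le)
                      (by rw [hs02]; exact hrest_below)
                    refine ⟨M, z, hz1, hz2, by rw [hz3, hse2, hse1], ?_⟩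
                    rw [sumUL_cons, sumDL_cons] at *
                    linarith
                  · push_neg at hkeep
                    obtain ⟨M, z, hz1, hz2, hz3, hz4⟩ := ih rest ulr k2 w2
                      (by simp only [List.length_cons] at hlen ⊢; omega)
                      hulr1 hulr2 hulr3 hrest1 hrest2 hw2 (by rw [hs02]; exact htc)
                      (by rw [hs02]; exact fun f hf => le_trans (hulr_below f hf) h3.le)
                      (by rw [hs02]; exact hrest_below)
                    refine ⟨M, z, hz1, hz2, by rw [hz3, hse2, hse1], ?_⟩
                    rw [sumUL_cons, sumDL_cons] at *
                    linarith
                · -- 3b : c-straddler, B < d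
                  push_neg at h4
                  by_cases h5 : p c - q c ≤ p B - q B
                  · -- keep (A,B), down pair becomes (B,d)
                    obtain ⟨k1, w1, hw1, hs01, hse1, hSe1⟩ :=
                      emit (p := p) (q := q) h4.le hw hdw
                    rw [if_pos h4] at hSe1
                    obtain ⟨M, z, hz1, hz2, hz3, hz4⟩ := ih rest ((A,B) :: ulr) k1 w1
                      (by simp only [List.length_cons] at hlen ⊢; omega)
                      hul1 hul2 hul3 hrest1 hrest2 hw1 (by rw [hs01]; exact htB)
                      (by rw [hs01]; intro f hf
                          rcases List.mem_cons.mp hf with rfl | hf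
                          · exact le_rfl
                          · exact le_trans (hulr_below f hf) hABle)
                      (by rw [hs01]; exact fun f hf => le_trans (hrest_below f hf) h2.le)
                    refine ⟨M, z, hz1, hz2, by rw [hz3, hse1], ?_⟩
                    rw [sumDL_cons] at *
                    have hf1 := le_trans (fD_ge p q B d) (fT_ge_fD p q B d)
                    linarith
                  · -- shrink up pair to (A,c)
                    push_neg at h5
                    obtain ⟨k1, w1, hw1, hs01, hse1, hSe1⟩ := emit (p := p) (q := q) hcd hw hdw
                    rw [if_pos hcd'] at hSe1
                    obtain ⟨M, z, hz1, hz2, hz3, hz4⟩ := ih rest ((A,c) :: ulr) k1 w1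
                      (by simp only [List.length_cons] at hlen ⊢; omega)
                      (by intro f hf
                          rcases List.mem_cons.mp hf with rfl | hf
                          · exact ⟨htA, h3.le⟩
                          · exact hulr1 f hf)
                      (by intro f hf
                          rcases List.mem_cons.mp hf with rfl | hf
                          · show 0 ≤ p c - p A - q A - q c
                            linarith
                          · exact hulr2 f hf)
                      (chain'_cons_of_below hulr3 hulr_below)
                      hrest1 hrest2 hw1 (by rw [hs01]; exact htc)
                      (by rw [hs01]; intro f hf
                          rcases List.mem_cons.mp hf with rfl | hf
                          · exact le_rfl
                          · exact le_trans (hulr_below f hf) h3.le)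
                      (by rw [hs01]; exact hrest_below)
                    refine ⟨M, z, hz1, hz2, by rw [hz3, hse1], ?_⟩
                    rw [sumUL_cons, sumDL_cons] at *
                    have hfT := fT_ge_fD p q c d
                    linarith
              · push_neg at h3
                by_cases h4 : B ≤ d
                · -- 3c : M-pair absorb
                  obtain ⟨k1, w1, hw1, hs01, hse1, hSe1⟩ := emit (p := p) (q := q) h4 hw hdw
                  obtain ⟨k2, w2, hw2, hs02, hse2, hSe2⟩ :=
                    emit (p := p) (q := q) hABle hw1 (by rw [hs01])
                  obtain ⟨M, z, hz1, hz2, hz3, hz4⟩ := ih ((c,A) :: rest) ulr k2 w2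
                    (by simp only [List.length_cons] at hlen ⊢; omega)
                    hulr1 hulr2 hulr3
                    (by intro f hf
                        rcases List.mem_cons.mp hf with rfl | hf
                        · exact ⟨htc, h3⟩
                        · exact hrest1 f hf)
                    (chain'_cons_of_below hrest2 hrest_below)
                    hw2 (by rw [hs02]; exact htA)
                    (by rw [hs02]; exact hulr_below)
                    (by rw [hs02]; intro f hf
                        rcases List.mem_cons.mp hf with rfl | hf
                        · exact le_rfl
                        · exact le_trans (hrest_below f hf) h3)
                  refine ⟨M, z, hz1, hz2, by rw [hz3, hse2, hse1], ?_⟩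
                  rw [sumUL_cons, sumDL_cons] at *
                  have hiteAB := ite_ge_rawU (p := p) (q := q) hABle (hq A htA)
                  have hiteBd := ite_ge_rawD (p := p) (q := q) h4 (hq B htB)
                  have hfDcA := fD_ge p q c A
                  linarith
                · -- 3d : d-straddler, c ≤ A < d < B
                  push_neg at h4
                  by_cases h5 : p A + q A ≤ p d + q d
                  · -- d* = A : emit (A,B), down pair becomes (c,A)
                    obtain ⟨k1, w1, hw1, hs01, hse1, hSe1⟩ :=
                      emit (p := p) (q := q) hABle hw hBw
                    rw [if_pos (lt_trans h1 h4)] at hSe1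
                    obtain ⟨M, z, hz1, hz2, hz3, hz4⟩ := ih ((c,A) :: rest) ulr k1 w1
                      (by simp only [List.length_cons] at hlen ⊢; omega)
                      hulr1 hulr2 hulr3
                      (by intro f hf
                          rcases List.mem_cons.mp hf with rfl | hf
                          · exact ⟨htc, h3⟩
                          · exact hrest1 f hf)
                      (chain'_cons_of_below hrest2 hrest_below)
                      hw1 (by rw [hs01]; exact htA)
                      (by rw [hs01]; exact hulr_below)
                      (by rw [hs01]; intro f hf
                          rcases List.mem_cons.mp hf with rfl | hf
                          · exact le_rfl
                          · exact le_trans (hrest_below f hf) h3)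
                    refine ⟨M, z, hz1, hz2, by rw [hz3, hse1], ?_⟩
                    rw [sumUL_cons, sumDL_cons] at *
                    have hf1 := le_trans (fU_ge p q A B) (fT_ge_fU p q A B)
                    have hfDcA := fD_ge p q c A
                    linarith
                  · -- d* = d : emit (d,B), keep down pair (c,d)
                    push_neg at h5
                    obtain ⟨k1, w1, hw1, hs01, hse1, hSe1⟩ :=
                      emit (p := p) (q := q) h4.le hw hBw
                    rw [if_pos h4] at hSe1
                    obtain ⟨M, z, hz1, hz2, hz3, hz4⟩ := ih ((c,d) :: rest) ulr k1 w1
                      (by simp only [List.length_cons] at hlen ⊢; omega)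
                      hulr1 hulr2 hulr3 hdl1 hdl2
                      hw1 (by rw [hs01]; exact le_trans htA h1.le)
                      (by rw [hs01]; exact fun f hf => le_trans (hulr_below f hf) h1.le)
                      (by rw [hs01]; intro f hf
                          rcases List.mem_cons.mp hf with rfl | hf
                          · exact le_rfl
                          · exact le_trans (hrest_below f hf) hcd)
                    refine ⟨M, z, hz1, hz2, by rw [hz3, hse1], ?_⟩
                    rw [sumUL_cons, sumDL_cons] at *
                    have hf1 := le_trans (fU_ge p q d B) (fT_ge_fU p q d B)
                    linarith

theorem merge {p q : ℝ → ℝ} {t₀ v : ℝ} (hq : ∀ x, t₀ ≤ x → 0 ≤ q x) (htv : t₀ ≤ v)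
    (hfT : genVar (fT p q) t₀ v ≠ ⊤) (hfU : genVar (fU p q) t₀ v ≠ ⊤)
    (hfD : genVar (fD p q) t₀ v ≠ ⊤) :
    (genVar (fU p q) t₀ v).toReal + (genVar (fD p q) t₀ v).toReal ≤
      (genVar (fT p q) t₀ v).toReal := by
  refine le_of_forall_pos_le_add fun ε hε => ?_
  obtain ⟨n, x, hx, hx0, hxn, hX⟩ := exists_near (fU_nonneg p q) htv hfU (half_pos hε)
  obtain ⟨m, y, hy, hy0, hym, hY⟩ := exists_near (fD_nonneg p q) htv hfD (half_pos hε)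
  obtain ⟨hu1, hu2, hu3, hu4, hu5⟩ := ulOf_spec p q hx hx0
  obtain ⟨hd1, hd2, hd3, hd4⟩ := dlOf_spec hy hy0 p q
  have hw : ok 0 (fun _ => v) := fun i hi => absurd hi (Nat.not_lt_zero i)
  obtain ⟨M, z, hz1, hz2, hz3, hz4⟩ := MC hq ((dlOf y m).length + (ulOf p q x n).length)
    (dlOf y m) (ulOf p q x n) 0 (fun _ => v) le_rfl
    hu1 hu2 hu3 hd1 hd2 hw htv
    (fun e he => le_trans (hu4 e he) hxn)
    (fun e he => le_trans (hd3 e he) hym)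
  have hS0 : S (fT p q) 0 (fun _ => v) = 0 := by simp [S]
  rw [hS0, hu5, hd4] at hz4
  have hZ := S_le_toReal hz1 hz2 (le_of_eq hz3) hfT
  linarith

theorem fU_neg (p q : ℝ → ℝ) : fU (fun x => -p x) q = fD p q := by
  funext s t; unfold fU fD; congr 1; ring
theorem fD_neg (p q : ℝ → ℝ) : fD (fun x => -p x) q = fU p q := by
  funext s t; unfold fU fD; congr 1; ring

/-- Full assembly, abstract form. -/
theorem final {p q : ℝ → ℝ} {t₀ : ℝ} (hq : ∀ x, t₀ ≤ x → 0 ≤ q x)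
    (hfin : ∀ t, t₀ ≤ t → genVar (fT p q) t₀ t ≠ ⊤) :
    ∃ φ : ℝ → ℝ, ∀ t, t₀ ≤ t →
      |p t - φ t| ≤ q t ∧
      genVar (fun s u => |φ u - φ s|) t₀ t = genVar (fT p q) t₀ t ∧
      genVar (fun s u => max (φ u - φ s) 0) t₀ t = genVar (fU p q) t₀ t ∧
      genVar (fun s u => max (φ s - φ u) 0) t₀ t = genVar (fD p q) t₀ t ∧
      φ t = φ t₀ + (genVar (fU p q) t₀ t).toReal - (genVar (fD p q) t₀ t).toReal := by
  classical
  have hfinU : ∀ t, t₀ ≤ t → genVar (fU p q) t₀ t ≠ ⊤ := fun t ht =>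
    (lt_of_le_of_lt (genVar_mono_f fun s u _ _ _ => fT_ge_fU p q s u)
      (hfin t ht).lt_top).ne
  have hfinD : ∀ t, t₀ ≤ t → genVar (fD p q) t₀ t ≠ ⊤ := fun t ht =>
    (lt_of_le_of_lt (genVar_mono_f fun s u _ _ _ => fT_ge_fD p q s u)
      (hfin t ht).lt_top).ne
  set Ur : ℝ → ℝ := fun t => (genVar (fU p q) t₀ t).toReal with hUr
  set Dr : ℝ → ℝ := fun t => (genVar (fD p q) t₀ t).toReal with hDr
  have hUr0 : Ur t₀ = 0 := by rw [hUr]; simp [genVar_self]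
  have hDr0 : Dr t₀ = 0 := by rw [hDr]; simp [genVar_self]
  have hUrnn : ∀ t, 0 ≤ Ur t := fun t => ENNReal.toReal_nonneg
  have hDrnn : ∀ t, 0 ≤ Dr t := fun t => ENNReal.toReal_nonneg
  have hUrmono : ∀ s t, t₀ ≤ s → s ≤ t → Ur s ≤ Ur t := fun s t hs hst =>
    ENNReal.toReal_mono (hfinU t (le_trans hs hst)) (genVar_mono_b hst)
  have hDrmono : ∀ s t, t₀ ≤ s → s ≤ t → Dr s ≤ Dr t := fun s t hs hst =>
    ENNReal.toReal_mono (hfinD t (le_trans hs hst)) (genVar_mono_b hst)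
  have hM1 : ∀ u v, t₀ ≤ u → u ≤ v →
      Ur v + Dr u ≤ Ur u + Dr v + (p v - p u + q u + q v) := fun u v hu huv =>
    master hq hu huv (hfinU v (le_trans hu huv)) (hfinD v (le_trans hu huv))
  have hM2 : ∀ u v, t₀ ≤ u → u ≤ v →
      Dr v + Ur u ≤ Dr u + Ur v + (-p v + p u + q u + q v) := by
    intro u v hu huv
    have := master (p := fun x => -p x) (q := q) hq hu huv
      (by rw [fU_neg]; exact hfinD v (le_trans hu huv))
      (by rw [fD_neg]; exact hfinU v (le_trans hu huv))
    rw [fU_neg, fD_neg] at this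
    beta_reduce at this
    linarith
  -- the band constant
  have hFG : ∀ x y, t₀ ≤ x → t₀ ≤ y →
      p x - q x - Ur x + Dr x ≤ p y + q y - Ur y + Dr y := by
    intro x y hx hy
    rcases le_total x y with h | h
    · have := hM1 x y hx h
      linarith
    · have := hM2 y x hy h
      linarith
  have hne : ((fun x => p x - q x - Ur x + Dr x) '' (Ici t₀)).Nonempty :=
    ⟨_, Set.mem_image_of_mem _ (Set.self_mem_Ici)⟩
  have hbdd : BddAbove ((fun x => p x - q x - Ur x + Dr x) '' (Ici t₀)) := by
    refine ⟨p t₀ + q t₀ - Ur t₀ + Dr t₀, fun z hz => ?_⟩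
    obtain ⟨x, hx, rfl⟩ := hz
    exact hFG x t₀ hx le_rfl
  set c : ℝ := sSup ((fun x => p x - q x - Ur x + Dr x) '' (Ici t₀)) with hc
  have hc1 : ∀ t, t₀ ≤ t → p t - q t - Ur t + Dr t ≤ c := fun t ht =>
    le_csSup hbdd (Set.mem_image_of_mem _ ht)
  have hc2 : ∀ t, t₀ ≤ t → c ≤ p t + q t - Ur t + Dr t := fun t ht =>
    csSup_le hne (fun z hz => by
      obtain ⟨x, hx, rfl⟩ := hz
      exact hFG x t hx ht)
  refine ⟨fun x => c + Ur x - Dr x, fun t ht => ?_⟩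
  have hband : ∀ u, t₀ ≤ u → |p u - (c + Ur u - Dr u)| ≤ q u := by
    intro u hu
    rw [abs_le]
    constructor
    · have := hc2 u hu; linarith
    · have := hc1 u hu; linarith
  -- key telescopes
  have keyU : ∀ n tt, ok n tt → t₀ ≤ tt 0 → tt n ≤ t →
      S (fun s u => max ((c + Ur u - Dr u) - (c + Ur s - Dr s)) 0) n tt ≤ Ur t := by
    intro n tt h1 h2 h3
    have hstep : ∀ i ∈ Finset.range n,
        max ((c + Ur (tt (i+1)) - Dr (tt (i+1))) - (c + Ur (tt i) - Dr (tt i))) 0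
          ≤ Ur (tt (i+1)) - Ur (tt i) := by
      intro i hi
      rw [Finset.mem_range] at hi
      have ha : t₀ ≤ tt i := le_trans h2 (h1.mono 0 i (Nat.zero_le i) hi.le)
      have hab : tt i ≤ tt (i+1) := (h1 i hi).le
      have h4 := hUrmono _ _ ha hab
      have h5 := hDrmono _ _ ha hab
      exact max_le (by linarith) (by linarith)
    calc S _ n tt ≤ ∑ i ∈ Finset.range n, (Ur (tt (i+1)) - Ur (tt i)) :=
          Finset.sum_le_sum hstep
      _ = Ur (tt n) - Ur (tt 0) := Finset.sum_range_sub (fun i => Ur (tt i)) n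
      _ ≤ Ur t := by
          have := hUrmono (tt n) t (le_trans h2 (h1.mono 0 n (Nat.zero_le n) le_rfl)) h3
          have := hUrnn (tt 0)
          have h6 : Ur (tt 0) ≤ Ur (tt n) := hUrmono _ _ h2 (h1.mono 0 n (Nat.zero_le n) le_rfl)
          have h7 : t₀ ≤ tt 0 := h2
          have h8 : 0 ≤ Ur (tt 0) := hUrnn _
          linarith [hUrmono (tt n) t (le_trans h2 (h1.mono 0 n (Nat.zero_le n) le_rfl)) h3]
  have keyD : ∀ n tt, ok n tt → t₀ ≤ tt 0 → tt n ≤ t →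
      S (fun s u => max ((c + Ur s - Dr s) - (c + Ur u - Dr u)) 0) n tt ≤ Dr t := by
    intro n tt h1 h2 h3
    have hstep : ∀ i ∈ Finset.range n,
        max ((c + Ur (tt i) - Dr (tt i)) - (c + Ur (tt (i+1)) - Dr (tt (i+1)))) 0
          ≤ Dr (tt (i+1)) - Dr (tt i) := by
      intro i hi
      rw [Finset.mem_range] at hi
      have ha : t₀ ≤ tt i := le_trans h2 (h1.mono 0 i (Nat.zero_le i) hi.le)
      have hab : tt i ≤ tt (i+1) := (h1 i hi).le
      have h4 := hUrmono _ _ ha hab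
      have h5 := hDrmono _ _ ha hab
      exact max_le (by linarith) (by linarith)
    calc S _ n tt ≤ ∑ i ∈ Finset.range n, (Dr (tt (i+1)) - Dr (tt i)) :=
          Finset.sum_le_sum hstep
      _ = Dr (tt n) - Dr (tt 0) := Finset.sum_range_sub (fun i => Dr (tt i)) n
      _ ≤ Dr t := by
          have h8 : 0 ≤ Dr (tt 0) := hDrnn _
          linarith [hDrmono (tt n) t (le_trans h2 (h1.mono 0 n (Nat.zero_le n) le_rfl)) h3]
  have keyT : ∀ n tt, ok n tt → t₀ ≤ tt 0 → tt n ≤ t →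
      S (fun s u => |(c + Ur u - Dr u) - (c + Ur s - Dr s)|) n tt ≤ Ur t + Dr t := by
    intro n tt h1 h2 h3
    have hstep : ∀ i ∈ Finset.range n,
        |(c + Ur (tt (i+1)) - Dr (tt (i+1))) - (c + Ur (tt i) - Dr (tt i))|
          ≤ (Ur (tt (i+1)) - Ur (tt i)) + (Dr (tt (i+1)) - Dr (tt i)) := by
      intro i hi
      rw [Finset.mem_range] at hi
      have ha : t₀ ≤ tt i := le_trans h2 (h1.mono 0 i (Nat.zero_le i) hi.le)
      have hab : tt i ≤ tt (i+1) := (h1 i hi).le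
      have h4 := hUrmono _ _ ha hab
      have h5 := hDrmono _ _ ha hab
      rw [abs_le]
      constructor <;> linarith
    calc S _ n tt ≤ ∑ i ∈ Finset.range n,
          ((Ur (tt (i+1)) - Ur (tt i)) + (Dr (tt (i+1)) - Dr (tt i))) :=
          Finset.sum_le_sum hstep
      _ = (Ur (tt n) - Ur (tt 0)) + (Dr (tt n) - Dr (tt 0)) := by
          rw [Finset.sum_add_distrib, Finset.sum_range_sub (fun i => Ur (tt i)) n,
            Finset.sum_range_sub (fun i => Dr (tt i)) n]
      _ ≤ Ur t + Dr t := by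
          have h8 : 0 ≤ Ur (tt 0) := hUrnn _
          have h9 : 0 ≤ Dr (tt 0) := hDrnn _
          have hn : t₀ ≤ tt n := le_trans h2 (h1.mono 0 n (Nat.zero_le n) le_rfl)
          linarith [hUrmono (tt n) t hn h3, hDrmono (tt n) t hn h3]
  -- pointwise comparisons from the band
  have hptU : ∀ s u : ℝ, t₀ ≤ s → s ≤ u → u ≤ t →
      fU p q s u ≤ max ((c + Ur u - Dr u) - (c + Ur s - Dr s)) 0 := by
    intro s u hs hsu _
    have h1 := hband s hs
    have h2 := hband u (le_trans hs hsu)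
    rw [abs_le] at h1 h2
    exact max_le (le_trans (by linarith) (le_max_left _ _)) (le_max_right _ _)
  have hptD : ∀ s u : ℝ, t₀ ≤ s → s ≤ u → u ≤ t →
      fD p q s u ≤ max ((c + Ur s - Dr s) - (c + Ur u - Dr u)) 0 := by
    intro s u hs hsu _
    have h1 := hband s hs
    have h2 := hband u (le_trans hs hsu)
    rw [abs_le] at h1 h2
    exact max_le (le_trans (by linarith) (le_max_left _ _)) (le_max_right _ _)
  have hptT : ∀ s u : ℝ, t₀ ≤ s → s ≤ u → u ≤ t →
      fT p q s u ≤ |(c + Ur u - Dr u) - (c + Ur s - Dr s)| := by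
    intro s u hs hsu _
    have h1 := hband s hs
    have h2 := hband u (le_trans hs hsu)
    rw [abs_le] at h1 h2
    refine max_le ?_ (abs_nonneg _)
    rcases abs_cases (p u - p s) with ⟨he, _⟩ | ⟨he, _⟩ <;> rw [he] <;>
      rcases abs_cases ((c + Ur u - Dr u) - (c + Ur s - Dr s)) with ⟨he2, _⟩ | ⟨he2, _⟩ <;>
      [skip; skip; skip; skip] <;> first
      | (rw [he2] at *; linarith)
      | (cases abs_cases ((c + Ur u - Dr u) - (c + Ur s - Dr s)) <;> linarith [abs_nonneg ((c + Ur u - Dr u) - (c + Ur s - Dr s)), le_abs_self ((c + Ur u - Dr u) - (c + Ur s - Dr s)), neg_abs_le ((c + Ur u - Dr u) - (c + Ur s - Dr s))])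
  refine ⟨hband t ht, ?_, ?_, ?_, ?_⟩
  · -- TV equality
    refine le_antisymm ?_ (genVar_mono_f hptT)
    refine le_trans (genVar_le fun n tt h1 h2 h3 => ENNReal.ofReal_le_ofReal (keyT n tt h1 h2 h3)) ?_
    have hmerge := merge hq ht (hfin t ht) (hfinU t ht) (hfinD t ht)
    refine le_trans (ENNReal.ofReal_le_ofReal hmerge) ?_
    rw [ENNReal.ofReal_toReal (hfin t ht)]
  · refine le_antisymm ?_ (genVar_mono_f hptU)
    refine le_trans (genVar_le fun n tt h1 h2 h3 => ENNReal.ofReal_le_ofReal (keyU n tt h1 h2 h3)) ?_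
    rw [ENNReal.ofReal_toReal (hfinU t ht)]
  · refine le_antisymm ?_ (genVar_mono_f hptD)
    refine le_trans (genVar_le fun n tt h1 h2 h3 => ENNReal.ofReal_le_ofReal (keyD n tt h1 h2 h3)) ?_
    rw [ENNReal.ofReal_toReal (hfinD t ht)]
  · show c + Ur t - Dr t = (c + Ur t₀ - Dr t₀) + Ur t - Dr t
    rw [hUr0, hDr0]
    ring

end S5X
end S5proofs

/-- existence of a function `ψ^{α,β}` of locally bounded
variation with `α ≤ ψ - ψ^{α,β} ≤ β`, attaining the α,β-truncated
variations and admitting the Jordan-like decomposition. -/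
theorem stmt5 (t₀ : ℝ) (ht₀ : 0 ≤ t₀) (ψ α β : ℝ → ℝ)
    (hψ : Regulated t₀ ψ) (hα : Regulated t₀ α) (hβ : Regulated t₀ β)
    (hαβ : ∀ t, t₀ ≤ t → α t ≤ β t)
    (hfin : ∀ t, t₀ ≤ t → TVab ψ α β t₀ t < ⊤) :
    ∃ φ : ℝ → ℝ,
      (∀ t, t₀ ≤ t →
        (α t ≤ ψ t - φ t ∧ ψ t - φ t ≤ β t) ∧
        TV φ t₀ t = TVab ψ α β t₀ t ∧
        UTV φ t₀ t = UTVab ψ α β t₀ t ∧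
        DTV φ t₀ t = DTVab ψ α β t₀ t ∧
        φ t = φ t₀ + (UTVab ψ α β t₀ t).toReal - (DTVab ψ α β t₀ t).toReal) := by
  have hT : TVab ψ α β
      = genVar (S5X.fT (fun x => ψ x - (α x + β x) / 2) (fun x => (β x - α x) / 2)) := by
    have hfn : (fun s t : ℝ =>
        max (|(ψ t - (α t + β t) / 2) - (ψ s - (α s + β s) / 2)|
            - ((β t - α t) + (β s - α s)) / 2) 0)
        = S5X.fT (fun x => ψ x - (α x + β x) / 2) (fun x => (β x - α x) / 2) := by
      funext s u
      show _ = max (|(ψ u - (α u + β u) / 2) - (ψ s - (α s + β s) / 2)|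
          - (β s - α s) / 2 - (β u - α u) / 2) 0
      congr 1
      ring
    unfold TVab
    rw [hfn]
  have hU : UTVab ψ α β
      = genVar (S5X.fU (fun x => ψ x - (α x + β x) / 2) (fun x => (β x - α x) / 2)) := by
    have hfn : (fun s t : ℝ =>
        max ((ψ t - (α t + β t) / 2) - (ψ s - (α s + β s) / 2)
            - ((β t - α t) + (β s - α s)) / 2) 0)
        = S5X.fU (fun x => ψ x - (α x + β x) / 2) (fun x => (β x - α x) / 2) := by
      funext s u
      show _ = max ((ψ u - (α u + β u) / 2) - (ψ s - (α s + β s) / 2)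
          - (β s - α s) / 2 - (β u - α u) / 2) 0
      congr 1
      ring
    unfold UTVab
    rw [hfn]
  have hD : DTVab ψ α β
      = genVar (S5X.fD (fun x => ψ x - (α x + β x) / 2) (fun x => (β x - α x) / 2)) := by
    have hfn : (fun s t : ℝ =>
        max ((ψ s - (α s + β s) / 2) - (ψ t - (α t + β t) / 2)
            - ((β t - α t) + (β s - α s)) / 2) 0)
        = S5X.fD (fun x => ψ x - (α x + β x) / 2) (fun x => (β x - α x) / 2) := by
      funext s u
      show _ = max ((ψ s - (α s + β s) / 2) - (ψ u - (α u + β u) / 2)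
          - (β s - α s) / 2 - (β u - α u) / 2) 0
      congr 1
      ring
    unfold DTVab
    rw [hfn]
  obtain ⟨φ, hφ⟩ := S5X.final (p := fun x => ψ x - (α x + β x) / 2)
      (q := fun x => (β x - α x) / 2) (t₀ := t₀)
      (fun x hx => by have := hαβ x hx; linarith)
      (fun t htt => by rw [← hT]; exact (hfin t htt).ne)
  refine ⟨φ, fun t htt => ?_⟩
  obtain ⟨hband, hTV, hUTV, hDTV, hJ⟩ := hφ t htt
  rw [abs_le] at hband
  refine ⟨⟨by linarith [hband.1, hband.2], by linarith [hband.1, hband.2]⟩, ?_, ?_, ?_, ?_⟩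
  · rw [hT]; exact hTV
  · rw [hU]; exact hUTV
  · rw [hD]; exact hDTV
  · rw [hU, hD]; exact hJ
end
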